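/- arXiv:2404.18252 — 4 statements merged into one kernel-verified Lean document; each statement's English description precedes it below -/
import Mathlib

section
/- Tweedie's formula for Gaussian noise: if x_t = √ᾱ x₀ + √(1-ᾱ) ε where x₀ is a real random variable with density and ε ~ N(0,1) independent of x₀, then E[x₀ | x_t = y] = (y + (1-ᾱ) · ∇_y log p_t(y)) / √ᾱ, where p_t is the density of x_t. -/
open Real MeasureTheory

/-- The Gaussian transition kernel of the forward process `x_t = √ᾱ x₀ + √(1-ᾱ) ε`. -/
noncomputable def gaussKernel (α y x : ℝ) : ℝ :=
  (1 / Real.sqrt (2 * Real.pi * (1 - α))) *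
    Real.exp (-(y - Real.sqrt α * x) ^ 2 / (2 * (1 - α)))

lemma abs_mul_exp_le_sqrt (s t : ℝ) (hs : 0 < s) :
    |t| * Real.exp (-t ^ 2 / (2 * s)) ≤ Real.sqrt s := by
  have ha : 0 < Real.sqrt s := Real.sqrt_pos.2 hs
  have has : Real.sqrt s ^ 2 = s := Real.sq_sqrt hs.le
  have h2 : t ^ 2 / (2 * s) + 1 ≤ Real.exp (t ^ 2 / (2 * s)) :=
    Real.add_one_le_exp _
  have h1 : |t| ≤ Real.sqrt s * (t ^ 2 / (2 * s) + 1) := by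
    rw [div_add' _ _ _ (by positivity : (2:ℝ) * s ≠ 0), mul_div_assoc',
      le_div_iff₀ (by positivity)]
    nlinarith [mul_nonneg ha.le (sq_nonneg (|t| - Real.sqrt s)), sq_abs t, has, ha]
  have h3 : |t| ≤ Real.sqrt s * Real.exp (t ^ 2 / (2 * s)) := by
    refine h1.trans ?_
    exact mul_le_mul_of_nonneg_left h2 ha.le
  calc |t| * Real.exp (-t ^ 2 / (2 * s))
      ≤ (Real.sqrt s * Real.exp (t ^ 2 / (2 * s))) * Real.exp (-t ^ 2 / (2 * s)) :=
        mul_le_mul_of_nonneg_right h3 (Real.exp_pos _).le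
    _ = Real.sqrt s := by
        rw [mul_assoc, ← Real.exp_add, neg_div, add_neg_cancel, Real.exp_zero, mul_one]

/-- Tweedie's formula: if `x_t = √ᾱ x₀ + √(1-ᾱ) ε` with `x₀` having density `p₀` and
`ε ~ N(0,1)` independent, then `E[x₀ | x_t = y] = (y + (1-ᾱ) ∇ log p_t(y)) / √ᾱ`. -/
theorem tweedie_formula (α : ℝ) (hα : 0 < α) (hα1 : α < 1)
    (p0 : ℝ → ℝ) (hp0 : ∀ x, 0 ≤ p0 x) (hp0meas : Measurable p0)
    (hp0int : ∫ x, p0 x = 1)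
    (hp0mom : Integrable (fun x => x * p0 x))
    (pt : ℝ → ℝ)
    (hpt : ∀ y, pt y = ∫ x, p0 x * gaussKernel α y x) :
    ∀ y : ℝ,
      (∫ x, x * (p0 x * gaussKernel α y x)) / pt y
        = (y + (1 - α) * deriv (fun z => Real.log (pt z)) y) / Real.sqrt α := by
  intro y
  have hs : (0 : ℝ) < 1 - α := by linarith
  have hπ : (0 : ℝ) < 2 * Real.pi * (1 - α) := by positivity
  have hc : (0 : ℝ) < 1 / Real.sqrt (2 * Real.pi * (1 - α)) := by positivity
  set c : ℝ := 1 / Real.sqrt (2 * Real.pi * (1 - α)) with hc_def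
  have hsa : 0 < Real.sqrt α := Real.sqrt_pos.2 hα
  -- kernel facts
  have hKpos : ∀ z x : ℝ, 0 < gaussKernel α z x := by
    intro z x
    unfold gaussKernel
    exact mul_pos hc (Real.exp_pos _)
  have hKle : ∀ z x : ℝ, gaussKernel α z x ≤ c := by
    intro z x
    unfold gaussKernel
    rw [← hc_def]
    nth_rewrite 2 [← mul_one c]
    refine mul_le_mul_of_nonneg_left ?_ hc.le
    rw [Real.exp_le_one_iff]
    apply div_nonpos_of_nonpos_of_nonneg
    · simp [sq_nonneg]
    · linarith
  have hKmeas : ∀ z, Measurable (fun x => gaussKernel α z x) := by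
    intro z
    unfold gaussKernel
    fun_prop
  have hp0i : Integrable p0 := by
    by_contra h
    rw [integral_undef h] at hp0int
    norm_num at hp0int
  have hint1 : ∀ z, Integrable (fun x => p0 x * gaussKernel α z x) := by
    intro z
    refine Integrable.mono (hp0i.const_mul c)
      ((hp0meas.mul (hKmeas z)).aestronglyMeasurable) ?_
    filter_upwards with x
    rw [Real.norm_eq_abs, Real.norm_eq_abs, abs_mul, abs_of_nonneg (hp0 x),
      abs_of_pos (hKpos z x), abs_of_nonneg (mul_nonneg hc.le (hp0 x)), mul_comm c]
    exact mul_le_mul_of_nonneg_left (hKle z x) (hp0 x)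
  have hint2 : ∀ z, Integrable (fun x => x * (p0 x * gaussKernel α z x)) := by
    intro z
    refine Integrable.mono (hp0mom.const_mul c)
      ((measurable_id.mul (hp0meas.mul (hKmeas z))).aestronglyMeasurable) ?_
    filter_upwards with x
    simp only [Real.norm_eq_abs, abs_mul]
    rw [abs_of_nonneg (hp0 x), abs_of_pos (hKpos z x), abs_of_pos hc]
    nlinarith [mul_nonneg (mul_nonneg (abs_nonneg x) (hp0 x))
      (sub_nonneg.2 (hKle z x))]
  -- positivity of pt y
  have hpt0 : 0 < pt y := by
    rw [hpt y]
    rcases lt_or_eq_of_le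
      (integral_nonneg (f := fun x => p0 x * gaussKernel α y x) fun x => mul_nonneg (hp0 x) (hKpos y x).le) with h | h
    · exact h
    · exfalso
      have h0 : (fun x => p0 x * gaussKernel α y x) =ᵐ[volume] 0 :=
        (integral_eq_zero_iff_of_nonneg
          (fun x => mul_nonneg (hp0 x) (hKpos y x).le) (hint1 y)).1 h.symm
      have hp00 : p0 =ᵐ[volume] 0 := by
        filter_upwards [h0] with x hx
        simpa using (mul_eq_zero.1 hx).resolve_right (hKpos y x).ne'
      rw [integral_congr_ae hp00] at hp0int
      simp at hp0int
  -- derivative of the kernel in y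
  have hderivK : ∀ z x : ℝ, HasDerivAt (fun w => gaussKernel α w x)
      ((-(z - Real.sqrt α * x) / (1 - α)) * gaussKernel α z x) z := by
    intro z x
    have h1 : HasDerivAt (fun w => -(w - Real.sqrt α * x) ^ 2 / (2 * (1 - α)))
        (-(z - Real.sqrt α * x) / (1 - α)) z := by
      have h := (((hasDerivAt_id z).sub_const (Real.sqrt α * x)).pow 2).neg.div_const
        (2 * (1 - α))
      refine HasDerivAt.congr_deriv h ?_
      simp only [id]
      field_simp
      ring
    have h2 := (h1.exp).const_mul c
    have h3 : (fun w => gaussKernel α w x)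
        = fun w => c * Real.exp (-(w - Real.sqrt α * x) ^ 2 / (2 * (1 - α))) := by
      funext w; rfl
    rw [h3]
    refine HasDerivAt.congr_deriv h2 ?_
    unfold gaussKernel
    ring
  -- differentiate under the integral sign
  have hder : HasDerivAt pt
      (∫ x, p0 x * ((-(y - Real.sqrt α * x) / (1 - α)) * gaussKernel α y x)) y := by
    have key := hasDerivAt_integral_of_dominated_loc_of_deriv_le (μ := volume)
      (F := fun z x => p0 x * gaussKernel α z x)
      (F' := fun z x => p0 x * ((-(z - Real.sqrt α * x) / (1 - α)) * gaussKernel α z x))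
      (x₀ := y) (bound := fun x => p0 x * (c / Real.sqrt (1 - α))) (Metric.ball_mem_nhds y one_pos)
      ?_ (hint1 y) ?_ ?_ ?_ ?_
    · have hpt_eq : pt = fun z => ∫ x, p0 x * gaussKernel α z x := funext hpt
      rw [hpt_eq]
      exact key.2
    · filter_upwards with z
      exact (hp0meas.mul (hKmeas z)).aestronglyMeasurable
    · apply Measurable.aestronglyMeasurable
      apply hp0meas.mul
      apply Measurable.mul ?_ (hKmeas y)
      fun_prop
    · filter_upwards with x z _
      have hb := abs_mul_exp_le_sqrt (1 - α) (z - Real.sqrt α * x) hs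
      have hsp : 0 < Real.sqrt (1 - α) := Real.sqrt_pos.2 hs
      have hK : gaussKernel α z x
          = c * Real.exp (-(z - Real.sqrt α * x) ^ 2 / (2 * (1 - α))) := rfl
      rw [Real.norm_eq_abs, hK, abs_mul, abs_of_nonneg (hp0 x)]
      refine mul_le_mul_of_nonneg_left ?_ (hp0 x)
      rw [abs_mul, abs_mul, abs_div, abs_neg, abs_of_pos hs, abs_of_pos hc,
        abs_of_pos (Real.exp_pos _), div_mul_eq_mul_div, div_le_div_iff₀ hs hsp]
      nlinarith [mul_le_mul_of_nonneg_left hb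
          (by positivity : (0:ℝ) ≤ c * Real.sqrt (1 - α)),
        Real.mul_self_sqrt hs.le]
    · exact hp0i.mul_const _
    · filter_upwards with x z _
      exact HasDerivAt.const_mul (p0 x) (hderivK z x)
  -- split the derivative integral
  have hsplit : (∫ x, p0 x * ((-(y - Real.sqrt α * x) / (1 - α)) * gaussKernel α y x))
      = (-y / (1 - α)) * (∫ x, p0 x * gaussKernel α y x)
        + (Real.sqrt α / (1 - α)) * (∫ x, x * (p0 x * gaussKernel α y x)) := by
    rw [← integral_const_mul, ← integral_const_mul,
      ← integral_add ((hint1 y).const_mul _) ((hint2 y).const_mul _)]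
    refine integral_congr_ae (Filter.Eventually.of_forall fun x => ?_)
    field_simp
    ring
  have hD : HasDerivAt pt
      ((-y / (1 - α)) * pt y
        + (Real.sqrt α / (1 - α)) * (∫ x, x * (p0 x * gaussKernel α y x))) y := by
    rw [hpt y]
    rw [hsplit] at hder
    exact hder
  have hlog : deriv (fun z => Real.log (pt z)) y
      = ((-y / (1 - α)) * pt y
        + (Real.sqrt α / (1 - α)) * (∫ x, x * (p0 x * gaussKernel α y x))) / pt y := by
    have hcomp := (Real.hasDerivAt_log hpt0.ne').comp y hD
    have : deriv (fun z => Real.log (pt z)) y = (pt y)⁻¹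
        * ((-y / (1 - α)) * pt y
          + (Real.sqrt α / (1 - α)) * (∫ x, x * (p0 x * gaussKernel α y x))) :=
      HasDerivAt.deriv hcomp
    rw [this]
    rw [inv_mul_eq_div, div_eq_div_iff hpt0.ne' hpt0.ne']
  rw [hlog]
  field_simp
  ring
end

section
/- Cramér–Rao-type bound for the score derivative of a convolved density: if p_t is the density of √ᾱ x₀ + √(1-ᾱ) ε with ε ~ N(0,1) independent of x₀ (with x₀ having a density), then for all y, the negative derivative of the score, -s'(y), is strictly less than 1/(1-ᾱ) whenever the conditional distribution of x₀ given x_t = y is nondegenerate. -/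
open Real MeasureTheory

namespace CR

noncomputable def gK1 (α y x : ℝ) : ℝ :=
  gaussKernel α y x * (-(y - Real.sqrt α * x) / (1 - α))

noncomputable def gK2 (α y x : ℝ) : ℝ :=
  gaussKernel α y x * ((y - Real.sqrt α * x) ^ 2 / (1 - α) ^ 2 - 1 / (1 - α))

lemma gauss_pos {α : ℝ} (hα1 : α < 1) (y x : ℝ) : 0 < gaussKernel α y x := by
  have h1 : 0 < 1 - α := by linarith
  have h : 0 < Real.sqrt (2 * Real.pi * (1 - α)) :=
    Real.sqrt_pos.mpr (by positivity)
  exact mul_pos (by positivity) (Real.exp_pos _)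

lemma gauss_le {α : ℝ} (hα1 : α < 1) (y x : ℝ) :
    gaussKernel α y x ≤ 1 / Real.sqrt (2 * Real.pi * (1 - α)) := by
  have h1 : 0 < 1 - α := by linarith
  have h : 0 < Real.sqrt (2 * Real.pi * (1 - α)) :=
    Real.sqrt_pos.mpr (by positivity)
  have hexp : Real.exp (-(y - Real.sqrt α * x) ^ 2 / (2 * (1 - α))) ≤ 1 := by
    rw [Real.exp_le_one_iff]
    have : (0:ℝ) ≤ (y - Real.sqrt α * x) ^ 2 := sq_nonneg _
    rw [div_nonpos_iff]
    right; constructor <;> nlinarith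
  unfold gaussKernel
  have hcpos : (0:ℝ) < 1 / Real.sqrt (2 * Real.pi * (1 - α)) := by positivity
  calc 1 / Real.sqrt (2 * Real.pi * (1 - α)) * Real.exp (-(y - Real.sqrt α * x) ^ 2 / (2 * (1 - α)))
      ≤ 1 / Real.sqrt (2 * Real.pi * (1 - α)) * 1 := mul_le_mul_of_nonneg_left hexp hcpos.le
    _ = 1 / Real.sqrt (2 * Real.pi * (1 - α)) := mul_one _

lemma hasDerivAt_gauss {α : ℝ} (hα1 : α < 1) (x y : ℝ) :
    HasDerivAt (fun y => gaussKernel α y x) (gK1 α y x) y := by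
  have h1 : (0:ℝ) < 1 - α := by linarith
  have hlin : HasDerivAt (fun y : ℝ => y - Real.sqrt α * x) 1 y :=
    (hasDerivAt_id y).sub_const _
  have hsq := hlin.pow 2
  have hquot := (hsq.neg.div_const (2 * (1 - α)))
  have hquot' : HasDerivAt (fun y : ℝ => -(y - Real.sqrt α * x) ^ 2 / (2 * (1 - α)))
      (-(y - Real.sqrt α * x) / (1 - α)) y := by
    refine hquot.congr_deriv ?_
    field_simp
    ring
  have := (hquot'.exp.const_mul (1 / Real.sqrt (2 * Real.pi * (1 - α))))
  refine this.congr_deriv ?_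
  unfold gK1 gaussKernel
  ring

lemma hasDerivAt_gK1 {α : ℝ} (hα1 : α < 1) (x y : ℝ) :
    HasDerivAt (fun y => gK1 α y x) (gK2 α y x) y := by
  have h1 : (0:ℝ) < 1 - α := by linarith
  have hg : HasDerivAt (fun y : ℝ => -(y - Real.sqrt α * x) / (1 - α)) (-1 / (1 - α)) y := by
    have hlin : HasDerivAt (fun y : ℝ => y - Real.sqrt α * x) 1 y :=
      (hasDerivAt_id y).sub_const _
    have := hlin.neg.div_const (1 - α)
    exact this
  have := (hasDerivAt_gauss hα1 x y).mul hg
  refine this.congr_deriv ?_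
  unfold gK2 gK1
  field_simp
  ring

lemma cont_gauss {α : ℝ} (y : ℝ) : Continuous (fun x => gaussKernel α y x) := by
  unfold gaussKernel; fun_prop

lemma cont_gK1 {α : ℝ} (y : ℝ) : Continuous (fun x => gK1 α y x) := by
  unfold gK1 gaussKernel; fun_prop

lemma cont_gK2 {α : ℝ} (y : ℝ) : Continuous (fun x => gK2 α y x) := by
  unfold gK2 gaussKernel; fun_prop

lemma abs_le_one_add_sq (x : ℝ) : |x| ≤ 1 + x ^ 2 := by
  nlinarith [sq_nonneg (|x| - 1), sq_abs x, abs_nonneg x]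

lemma gK1_bound {α : ℝ} (hα : 0 ≤ α) (hα1 : α < 1) (z x : ℝ) :
    |gK1 α z x| ≤ (1 / Real.sqrt (2 * Real.pi * (1 - α)) / (1 - α)) * (|z| + 1) * (1 + x ^ 2) := by
  have h1 : (0:ℝ) < 1 - α := by linarith
  set c := 1 / Real.sqrt (2 * Real.pi * (1 - α)) with hc
  have hcpos : 0 < c := by
    have : 0 < Real.sqrt (2 * Real.pi * (1 - α)) := Real.sqrt_pos.mpr (by positivity)
    positivity
  have hK0 : 0 < gaussKernel α z x := gauss_pos hα1 z x
  have hKc : gaussKernel α z x ≤ c := gauss_le hα1 z x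
  have hs1 : Real.sqrt α ≤ 1 := by
    rw [show (1:ℝ) = Real.sqrt 1 by simp]
    exact Real.sqrt_le_sqrt (by linarith)
  have hs0 : 0 ≤ Real.sqrt α := Real.sqrt_nonneg α
  have habs : |z - Real.sqrt α * x| ≤ |z| + |x| := by
    calc |z - Real.sqrt α * x| ≤ |z| + |Real.sqrt α * x| := abs_sub _ _
    _ ≤ |z| + |x| := by
        rw [abs_mul, abs_of_nonneg hs0]
        nlinarith [abs_nonneg x]
  have hx : |x| ≤ 1 + x ^ 2 := abs_le_one_add_sq x
  unfold gK1
  rw [abs_mul, abs_div, abs_neg, abs_of_pos h1, abs_of_pos hK0]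
  rw [show gaussKernel α z x * (|z - Real.sqrt α * x| / (1 - α))
      = gaussKernel α z x * |z - Real.sqrt α * x| / (1 - α) by ring,
    show c / (1 - α) * (|z| + 1) * (1 + x ^ 2)
      = c * (|z| + 1) * (1 + x ^ 2) / (1 - α) by ring,
    div_le_div_iff_of_pos_right h1]
  nlinarith [mul_le_mul hKc habs (abs_nonneg _) hcpos.le,
    mul_le_mul_of_nonneg_left hx hcpos.le,
    mul_nonneg (mul_nonneg hcpos.le (abs_nonneg z)) (sq_nonneg x),
    abs_nonneg z, hcpos]

lemma gK2_bound {α : ℝ} (hα : 0 ≤ α) (hα1 : α < 1) (z x : ℝ) :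
    |gK2 α z x| ≤ ((1 / Real.sqrt (2 * Real.pi * (1 - α))) * (2 * z ^ 2 + 2) / (1 - α) ^ 2
      + (1 / Real.sqrt (2 * Real.pi * (1 - α))) / (1 - α)) * (1 + x ^ 2) := by
  have h1 : (0:ℝ) < 1 - α := by linarith
  set c := 1 / Real.sqrt (2 * Real.pi * (1 - α)) with hc
  have hcpos : 0 < c := by
    have : 0 < Real.sqrt (2 * Real.pi * (1 - α)) := Real.sqrt_pos.mpr (by positivity)
    positivity
  have hK0 : 0 < gaussKernel α z x := gauss_pos hα1 z x
  have hKc : gaussKernel α z x ≤ c := gauss_le hα1 z x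
  set u := z - Real.sqrt α * x with hu
  have hsq : Real.sqrt α * Real.sqrt α = α := Real.mul_self_sqrt hα
  have ht : u ^ 2 ≤ 2 * z ^ 2 + 2 * x ^ 2 := by
    rw [hu]
    nlinarith [sq_nonneg (z + Real.sqrt α * x), sq_nonneg x, sq_nonneg (Real.sqrt α * x),
      Real.sqrt_nonneg α, sq_nonneg (Real.sqrt α * x - x), sq_nonneg (Real.sqrt α * x + x)]
  have habs : |u ^ 2 / (1 - α) ^ 2 - 1 / (1 - α)| ≤ u ^ 2 / (1 - α) ^ 2 + 1 / (1 - α) := by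
    have h2 : (0:ℝ) ≤ u ^ 2 / (1 - α) ^ 2 := by positivity
    have h3 : (0:ℝ) ≤ 1 / (1 - α) := by positivity
    rw [abs_sub_le_iff]
    constructor <;> linarith
  have step1 : |gK2 α z x| ≤ c * (u ^ 2 / (1 - α) ^ 2 + 1 / (1 - α)) := by
    unfold gK2
    rw [abs_mul, abs_of_pos hK0]
    exact mul_le_mul hKc habs (abs_nonneg _) hcpos.le
  refine step1.trans ?_
  rw [show c * (u ^ 2 / (1 - α) ^ 2 + 1 / (1 - α)) = (c * u ^ 2 + c * (1 - α)) / (1 - α) ^ 2 by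
      field_simp,
    show (c * (2 * z ^ 2 + 2) / (1 - α) ^ 2 + c / (1 - α)) * (1 + x ^ 2)
      = ((c * (2 * z ^ 2 + 2) + c * (1 - α)) * (1 + x ^ 2)) / (1 - α) ^ 2 by field_simp,
    div_le_div_iff_of_pos_right (by positivity)]
  nlinarith [mul_le_mul_of_nonneg_left ht hcpos.le, sq_nonneg x, sq_nonneg z,
    mul_nonneg (mul_nonneg hcpos.le (sq_nonneg z)) (sq_nonneg x),
    mul_nonneg hcpos.le (sq_nonneg x), hcpos, h1,
    mul_nonneg (mul_nonneg hcpos.le h1.le) (sq_nonneg x)]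

lemma gK2_decomp (s σ K p x z : ℝ) (hσ : σ ≠ 0) :
    p * (K * ((z - s * x) ^ 2 / σ ^ 2 - 1 / σ))
      = (z ^ 2 * (p * K) - 2 * s * z * (x * (p * K)) + s ^ 2 * (x ^ 2 * (p * K))) / σ ^ 2
        - p * K / σ := by
  field_simp
  ring

lemma key_id (s σ P M1 M2 y : ℝ) (hσ : σ ≠ 0) (hP : P ≠ 0) :
    (s * M1 - y * P) / σ * ((s * M1 - y * P) / σ)
      - ((y ^ 2 * P - 2 * s * y * M1 + s ^ 2 * M2) / σ ^ 2 - P / σ) * P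
    = P ^ 2 / σ - s ^ 2 * (M2 * P - M1 ^ 2) / σ ^ 2 := by
  field_simp
  ring

end CR

open CR Metric

/-- Cramér–Rao-type bound for the score derivative of a convolved density: whenever the
conditional distribution of `x₀` given `x_t = y` is nondegenerate (positive conditional
variance), the negative derivative of the score is strictly less than `1/(1-ᾱ)`. -/
theorem cramer_rao_score_bound (α : ℝ) (hα : 0 < α) (hα1 : α < 1)
    (p0 : ℝ → ℝ) (hp0 : ∀ x, 0 ≤ p0 x) (hp0meas : Measurable p0)
    (hp0int : ∫ x, p0 x = 1)
    (hp0mom2 : Integrable (fun x => x ^ 2 * p0 x))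
    (pt m v : ℝ → ℝ)
    (hpt : ∀ y, pt y = ∫ x, p0 x * gaussKernel α y x)
    (hm : ∀ y, m y = (∫ x, x * (p0 x * gaussKernel α y x)) / pt y)
    (hv : ∀ y, v y = (∫ x, x ^ 2 * (p0 x * gaussKernel α y x)) / pt y - (m y) ^ 2) :
    ∀ y : ℝ, 0 < v y →
      -(deriv (fun z => deriv (fun w => Real.log (pt w)) z) y) < 1 / (1 - α) := by
  have hσ : (0:ℝ) < 1 - α := by linarith
  set c := 1 / Real.sqrt (2 * Real.pi * (1 - α)) with hc
  have hcpos : 0 < c := by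
    have : 0 < Real.sqrt (2 * Real.pi * (1 - α)) := Real.sqrt_pos.mpr (by positivity)
    positivity
  -- p0 is integrable
  have hIp0 : Integrable p0 := by
    by_contra h
    rw [integral_undef h] at hp0int
    exact one_ne_zero hp0int.symm
  have hIbase : Integrable (fun x => (1 + x ^ 2) * p0 x) := by
    have he : (fun x : ℝ => (1 + x ^ 2) * p0 x) = fun x => p0 x + x ^ 2 * p0 x := by
      funext x; ring
    rw [he]; exact hIp0.add hp0mom2
  -- master integrability lemma
  have master : ∀ (f : ℝ → ℝ), AEStronglyMeasurable f volume →
      ∀ C : ℝ, (∀ x, |f x| ≤ C * ((1 + x ^ 2) * p0 x)) → Integrable f := by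
    intro f hf C hb
    exact (hIbase.const_mul C).mono' hf (Filter.Eventually.of_forall (fun x => by
      rw [Real.norm_eq_abs]; exact hb x))
  have hp0abs : ∀ x : ℝ, |p0 x| = p0 x := fun x => abs_of_nonneg (hp0 x)
  -- integrabilities
  have I0 : ∀ z : ℝ, Integrable (fun x => p0 x * gaussKernel α z x) := by
    intro z
    refine master _ (hp0meas.aestronglyMeasurable.mul (cont_gauss z).aestronglyMeasurable) c ?_
    intro x
    rw [abs_mul, hp0abs, abs_of_pos (gauss_pos hα1 z x)]
    have h1 : p0 x * gaussKernel α z x ≤ p0 x * c :=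
      mul_le_mul_of_nonneg_left (gauss_le hα1 z x) (hp0 x)
    nlinarith [mul_nonneg (mul_nonneg hcpos.le (sq_nonneg x)) (hp0 x)]
  have I1 : ∀ z : ℝ, Integrable (fun x => x * (p0 x * gaussKernel α z x)) := by
    intro z
    refine master _ ((measurable_id.mul (hp0meas.mul (cont_gauss z).measurable)).aestronglyMeasurable) c ?_
    intro x
    rw [abs_mul, abs_mul, hp0abs, abs_of_pos (gauss_pos hα1 z x)]
    have h1 : |x| * (p0 x * gaussKernel α z x) ≤ |x| * (p0 x * c) :=
      mul_le_mul_of_nonneg_left (mul_le_mul_of_nonneg_left (gauss_le hα1 z x) (hp0 x)) (abs_nonneg x)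
    have h2 : |x| * (p0 x * c) ≤ (1 + x ^ 2) * (p0 x * c) :=
      mul_le_mul_of_nonneg_right (abs_le_one_add_sq x) (mul_nonneg (hp0 x) hcpos.le)
    nlinarith
  have I2 : ∀ z : ℝ, Integrable (fun x => x ^ 2 * (p0 x * gaussKernel α z x)) := by
    intro z
    refine master _ (((measurable_id.pow_const 2).mul (hp0meas.mul (cont_gauss z).measurable)).aestronglyMeasurable) c ?_
    intro x
    rw [abs_mul, abs_mul, hp0abs, abs_of_pos (gauss_pos hα1 z x), abs_pow, sq_abs]
    have h1 : x ^ 2 * (p0 x * gaussKernel α z x) ≤ x ^ 2 * (p0 x * c) :=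
      mul_le_mul_of_nonneg_left (mul_le_mul_of_nonneg_left (gauss_le hα1 z x) (hp0 x)) (sq_nonneg x)
    nlinarith [mul_nonneg hcpos.le (hp0 x), sq_nonneg x]
  have IK1 : ∀ z : ℝ, Integrable (fun x => p0 x * gK1 α z x) := by
    intro z
    refine master _ (hp0meas.aestronglyMeasurable.mul (cont_gK1 z).aestronglyMeasurable)
      (c / (1 - α) * (|z| + 1)) ?_
    intro x
    rw [abs_mul, hp0abs]
    have h1 := gK1_bound hα.le hα1 z x
    rw [← hc] at h1
    calc p0 x * |gK1 α z x| ≤ p0 x * (c / (1 - α) * (|z| + 1) * (1 + x ^ 2)) :=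
          mul_le_mul_of_nonneg_left h1 (hp0 x)
      _ = c / (1 - α) * (|z| + 1) * ((1 + x ^ 2) * p0 x) := by ring
  have IK2 : ∀ z : ℝ, Integrable (fun x => p0 x * gK2 α z x) := by
    intro z
    refine master _ (hp0meas.aestronglyMeasurable.mul (cont_gK2 z).aestronglyMeasurable)
      (c * (2 * z ^ 2 + 2) / (1 - α) ^ 2 + c / (1 - α)) ?_
    intro x
    rw [abs_mul, hp0abs]
    have h1 := gK2_bound hα.le hα1 z x
    rw [← hc] at h1
    calc p0 x * |gK2 α z x|
        ≤ p0 x * ((c * (2 * z ^ 2 + 2) / (1 - α) ^ 2 + c / (1 - α)) * (1 + x ^ 2)) :=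
          mul_le_mul_of_nonneg_left h1 (hp0 x)
      _ = (c * (2 * z ^ 2 + 2) / (1 - α) ^ 2 + c / (1 - α)) * ((1 + x ^ 2) * p0 x) := by ring
  -- positivity of pt
  have hsupp : 0 < volume (Function.support p0) := by
    by_contra h
    have h0 : volume (Function.support p0) = 0 := le_antisymm (not_lt.mp h) zero_le
    have hae : p0 =ᵐ[volume] 0 := by
      rw [Filter.EventuallyEq, ae_iff]
      simpa [Function.support] using h0
    rw [integral_congr_ae hae] at hp0int
    simp at hp0int
  have hptpos : ∀ z : ℝ, 0 < pt z := by
    intro z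
    rw [hpt z]
    rw [integral_pos_iff_support_of_nonneg
      (fun x => mul_nonneg (hp0 x) (gauss_pos hα1 z x).le) (I0 z)]
    have hse : Function.support (fun x => p0 x * gaussKernel α z x) = Function.support p0 := by
      ext x
      simp only [Function.mem_support, mul_ne_zero_iff]
      exact ⟨fun h => h.1, fun h => ⟨h, (gauss_pos hα1 z x).ne'⟩⟩
    rw [hse]
    exact hsupp
  -- derivatives under the integral
  set pt1 : ℝ → ℝ := fun z => ∫ x, p0 x * gK1 α z x with hpt1def
  set pt2 : ℝ → ℝ := fun z => ∫ x, p0 x * gK2 α z x with hpt2def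
  have hpteq : pt = fun w => ∫ x, p0 x * gaussKernel α w x := funext hpt
  have hPtHas : ∀ z : ℝ, HasDerivAt pt (pt1 z) z := by
    intro z
    rw [hpteq]
    refine (hasDerivAt_integral_of_dominated_loc_of_deriv_le (μ := volume)
      (F := fun w x => p0 x * gaussKernel α w x)
      (F' := fun w x => p0 x * gK1 α w x)
      (bound := fun x => (c / (1 - α) * (|z| + 2)) * ((1 + x ^ 2) * p0 x))
      (ball_mem_nhds z zero_lt_one) ?_ ?_ ?_ ?_ ?_ ?_).2
    · exact Filter.Eventually.of_forall (fun w =>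
        hp0meas.aestronglyMeasurable.mul (cont_gauss w).aestronglyMeasurable)
    · exact I0 z
    · exact hp0meas.aestronglyMeasurable.mul (cont_gK1 z).aestronglyMeasurable
    · refine Filter.Eventually.of_forall (fun x => fun w hw => ?_)
      have hwz : |w| ≤ |z| + 1 := by
        have := mem_ball_iff_norm.mp hw
        rw [Real.norm_eq_abs] at this
        calc |w| = |z + (w - z)| := by ring_nf
          _ ≤ |z| + |w - z| := abs_add_le _ _
          _ ≤ |z| + 1 := by linarith
      rw [Real.norm_eq_abs, abs_mul, hp0abs]
      have h1 := gK1_bound hα.le hα1 w x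
      rw [← hc] at h1
      have h2 : c / (1 - α) * (|w| + 1) * (1 + x ^ 2)
          ≤ c / (1 - α) * (|z| + 2) * (1 + x ^ 2) := by
        have hcc : 0 ≤ c / (1 - α) := by positivity
        have hnn : (0:ℝ) ≤ 1 + x ^ 2 := by positivity
        nlinarith [mul_nonneg (mul_nonneg hcc hnn) (by linarith : (0:ℝ) ≤ |z| + 1 - |w|)]
      calc p0 x * |gK1 α w x| ≤ p0 x * (c / (1 - α) * (|z| + 2) * (1 + x ^ 2)) :=
            mul_le_mul_of_nonneg_left (h1.trans h2) (hp0 x)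
        _ = c / (1 - α) * (|z| + 2) * ((1 + x ^ 2) * p0 x) := by ring
    · exact hIbase.const_mul _
    · refine Filter.Eventually.of_forall (fun x => fun w _ => ?_)
      exact (hasDerivAt_gauss hα1 x w).const_mul (p0 x)
  have hPt1Has : ∀ z : ℝ, HasDerivAt pt1 (pt2 z) z := by
    intro z
    refine (hasDerivAt_integral_of_dominated_loc_of_deriv_le (μ := volume)
      (F := fun w x => p0 x * gK1 α w x)
      (F' := fun w x => p0 x * gK2 α w x)
      (bound := fun x => (c * (2 * (|z| + 1) ^ 2 + 2) / (1 - α) ^ 2 + c / (1 - α))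
        * ((1 + x ^ 2) * p0 x))
      (ball_mem_nhds z zero_lt_one) ?_ ?_ ?_ ?_ ?_ ?_).2
    · exact Filter.Eventually.of_forall (fun w =>
        hp0meas.aestronglyMeasurable.mul (cont_gK1 w).aestronglyMeasurable)
    · exact IK1 z
    · exact hp0meas.aestronglyMeasurable.mul (cont_gK2 z).aestronglyMeasurable
    · refine Filter.Eventually.of_forall (fun x => fun w hw => ?_)
      have hwz : |w| ≤ |z| + 1 := by
        have := mem_ball_iff_norm.mp hw
        rw [Real.norm_eq_abs] at this
        calc |w| = |z + (w - z)| := by ring_nf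
          _ ≤ |z| + |w - z| := abs_add_le _ _
          _ ≤ |z| + 1 := by linarith
      have hw2 : w ^ 2 ≤ (|z| + 1) ^ 2 := by
        rw [← sq_abs w]
        exact pow_le_pow_left₀ (abs_nonneg w) hwz 2
      rw [Real.norm_eq_abs, abs_mul, hp0abs]
      have h1 := gK2_bound hα.le hα1 w x
      rw [← hc] at h1
      have h2 : (c * (2 * w ^ 2 + 2) / (1 - α) ^ 2 + c / (1 - α)) * (1 + x ^ 2)
          ≤ (c * (2 * (|z| + 1) ^ 2 + 2) / (1 - α) ^ 2 + c / (1 - α)) * (1 + x ^ 2) := by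
        gcongr
        all_goals first | positivity | exact hw2 | exact hcpos.le
      calc p0 x * |gK2 α w x|
          ≤ p0 x * ((c * (2 * (|z| + 1) ^ 2 + 2) / (1 - α) ^ 2 + c / (1 - α)) * (1 + x ^ 2)) :=
            mul_le_mul_of_nonneg_left (h1.trans h2) (hp0 x)
        _ = (c * (2 * (|z| + 1) ^ 2 + 2) / (1 - α) ^ 2 + c / (1 - α)) * ((1 + x ^ 2) * p0 x) := by
            ring
    · exact hIbase.const_mul _
    · refine Filter.Eventually.of_forall (fun x => fun w _ => ?_)
      exact (hasDerivAt_gK1 hα1 x w).const_mul (p0 x)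
  -- closed forms for pt1 and pt2
  have hpt1eq : ∀ z : ℝ, pt1 z =
      (Real.sqrt α * (∫ x, x * (p0 x * gaussKernel α z x)) - z * pt z) / (1 - α) := by
    intro z
    have hfe : (fun x => p0 x * gK1 α z x) =
        fun x => (Real.sqrt α * (x * (p0 x * gaussKernel α z x))
          - z * (p0 x * gaussKernel α z x)) / (1 - α) := by
      funext x
      unfold gK1
      field_simp
      ring
    rw [hpt1def]
    simp only []
    rw [hfe, integral_div,
      integral_sub ((I1 z).const_mul _) ((I0 z).const_mul _),
      integral_const_mul, integral_const_mul, ← hpt z]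
  have hpt2eq : ∀ z : ℝ, pt2 z =
      (z ^ 2 * pt z - 2 * Real.sqrt α * z * (∫ x, x * (p0 x * gaussKernel α z x))
        + Real.sqrt α ^ 2 * (∫ x, x ^ 2 * (p0 x * gaussKernel α z x))) / (1 - α) ^ 2
      - pt z / (1 - α) := by
    intro z
    have hfe : (fun x => p0 x * gK2 α z x) =
        fun x => (z ^ 2 * (p0 x * gaussKernel α z x)
          - 2 * Real.sqrt α * z * (x * (p0 x * gaussKernel α z x))
          + Real.sqrt α ^ 2 * (x ^ 2 * (p0 x * gaussKernel α z x))) / (1 - α) ^ 2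
          - (p0 x * gaussKernel α z x) / (1 - α) := by
      funext x
      unfold gK2
      exact gK2_decomp (Real.sqrt α) (1 - α) (gaussKernel α z x) (p0 x) x z hσ.ne'
    have hIa : Integrable (fun x => z ^ 2 * (p0 x * gaussKernel α z x)
        - 2 * Real.sqrt α * z * (x * (p0 x * gaussKernel α z x))) :=
      ((I0 z).const_mul _).sub ((I1 z).const_mul _)
    have hIb : Integrable (fun x => (z ^ 2 * (p0 x * gaussKernel α z x)
        - 2 * Real.sqrt α * z * (x * (p0 x * gaussKernel α z x)))
        + Real.sqrt α ^ 2 * (x ^ 2 * (p0 x * gaussKernel α z x))) :=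
      hIa.add ((I2 z).const_mul _)
    have hIc : Integrable (fun x => (z ^ 2 * (p0 x * gaussKernel α z x)
        - 2 * Real.sqrt α * z * (x * (p0 x * gaussKernel α z x))
        + Real.sqrt α ^ 2 * (x ^ 2 * (p0 x * gaussKernel α z x))) / (1 - α) ^ 2) :=
      hIb.div_const _
    have hId : Integrable (fun x => (p0 x * gaussKernel α z x) / (1 - α)) :=
      (I0 z).div_const _
    rw [hpt2def]
    simp only []
    rw [hfe, integral_sub hIc hId, integral_div, integral_div,
      integral_add hIa ((I2 z).const_mul (Real.sqrt α ^ 2)),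
      integral_sub ((I0 z).const_mul (z ^ 2)) ((I1 z).const_mul (2 * Real.sqrt α * z)),
      integral_const_mul, integral_const_mul, integral_const_mul, ← hpt z]
  -- now the main computation
  intro y hvy
  have hlog : deriv (fun w => Real.log (pt w)) = fun w => pt1 w / pt w :=
    funext fun w => ((hPtHas w).log (hptpos w).ne').deriv
  have hdiv : HasDerivAt (fun z => pt1 z / pt z)
      ((pt2 y * pt y - pt1 y * pt1 y) / (pt y) ^ 2) y :=
    (hPt1Has y).div (hPtHas y) (hptpos y).ne'
  simp only [hlog]
  rw [hdiv.deriv]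
  set M1i := ∫ x, x * (p0 x * gaussKernel α y x) with hM1i
  set M2i := ∫ x, x ^ 2 * (p0 x * gaussKernel α y x) with hM2i
  have hD : 0 < M2i * pt y - M1i ^ 2 := by
    have he : M2i * pt y - M1i ^ 2 = v y * pt y ^ 2 := by
      rw [hv y, hm y, ← hM1i, ← hM2i]
      have hPne : pt y ≠ 0 := (hptpos y).ne'
      field_simp
    rw [he]
    exact mul_pos hvy (pow_pos (hptpos y) 2)
  have hkey : pt1 y * pt1 y - pt2 y * pt y =
      (pt y) ^ 2 / (1 - α) - Real.sqrt α ^ 2 * (M2i * pt y - M1i ^ 2) / (1 - α) ^ 2 := by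
    rw [hpt1eq y, hpt2eq y, ← hM1i, ← hM2i]
    exact key_id (Real.sqrt α) (1 - α) (pt y) M1i M2i y hσ.ne' (hptpos y).ne'
  have hq : 0 < Real.sqrt α ^ 2 * (M2i * pt y - M1i ^ 2) / (1 - α) ^ 2 :=
    div_pos (mul_pos (pow_pos (Real.sqrt_pos.mpr hα) 2) hD) (pow_pos hσ 2)
  have hlt : pt1 y * pt1 y - pt2 y * pt y < pt y ^ 2 / (1 - α) := by
    rw [hkey]; linarith
  rw [show -((pt2 y * pt y - pt1 y * pt1 y) / pt y ^ 2)
    = (pt1 y * pt1 y - pt2 y * pt y) / pt y ^ 2 by ring]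
  rw [div_lt_div_iff₀ (pow_pos (hptpos y) 2) hσ]
  have hmul := mul_lt_mul_of_pos_right hlt hσ
  rw [div_mul_cancel₀ _ hσ.ne'] at hmul
  linarith
end

section
/- Fisher information decreases under Gaussian smoothing: if X has smooth density with finite Fisher information I(X), and Z ~ N(0, σ²) is independent of X, then the Fisher information of X + Z satisfies I(X+Z) ≤ min(I(X), 1/σ²). -/
open Real MeasureTheory Filter Set

/-- A real integrable function having a limit at `atTop` has limit zero. -/
lemma limit_zero_of_integrable_atTop {f : ℝ → ℝ} (hf : Integrable f) {L : ℝ}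
    (h : Tendsto f atTop (nhds L)) : L = 0 := by
  by_contra hL
  have hpos : 0 < |L| / 2 := by positivity
  have hev : ∀ᶠ x in atTop, |L| / 2 ≤ |f x| := by
    have : Tendsto (fun x => |f x|) atTop (nhds |L|) := h.abs
    have := this.eventually_const_le (by linarith : |L| / 2 < |L|)
    exact this
  obtain ⟨A, hA⟩ := hev.exists_forall_of_atTop
  have hint : Integrable (fun _ : ℝ => |L| / 2) (volume.restrict (Ioi A)) := by
    refine Integrable.mono' (hf.abs.restrict (s := Ioi A)) aestronglyMeasurable_const ?_
    filter_upwards [ae_restrict_mem measurableSet_Ioi] with x hx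
    simpa [abs_of_nonneg hpos.le] using hA x (le_of_lt hx)
  rw [integrable_const_iff] at hint
  rcases hint with h0 | hfin
  · exact absurd h0 (by positivity)
  · have := hfin.measure_univ_lt_top; simp [Measure.restrict_apply_univ] at this

lemma limit_zero_of_integrable_atBot {f : ℝ → ℝ} (hf : Integrable f) {L : ℝ}
    (h : Tendsto f atBot (nhds L)) : L = 0 := by
  have : Tendsto (fun x => f (-x)) atTop (nhds L) := h.comp tendsto_neg_atTop_atBot
  exact limit_zero_of_integrable_atTop (hf.comp_neg) this

/-- If `f` is differentiable with integrable derivative and `f` itself is integrable,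
then the integral of the derivative over `ℝ` vanishes. -/
lemma integral_deriv_eq_zero_of_integrable {f f' : ℝ → ℝ}
    (hd : ∀ x, HasDerivAt f (f' x) x) (hf : Integrable f) (hf' : Integrable f') :
    ∫ x, f' x = 0 := by
  have hfc : ∀ a b : ℝ, f b - f a = ∫ x in a..b, f' x := by
    intro a b
    rw [intervalIntegral.integral_eq_sub_of_hasDerivAt (fun x _ => hd x)
      hf'.intervalIntegrable]
  have htop : Tendsto f atTop (nhds (f 0 + ∫ x in Ioi 0, f' x)) := by
    have h1 : Tendsto (fun b => ∫ x in (0:ℝ)..b, f' x) atTop (nhds (∫ x in Ioi 0, f' x)) :=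
      intervalIntegral_tendsto_integral_Ioi 0 hf'.integrableOn tendsto_id
    have : (fun b => f 0 + ∫ x in (0:ℝ)..b, f' x) = f := by
      funext b; rw [← hfc 0 b]; ring
    simpa [this] using h1.const_add (f 0)
  have hbot : Tendsto f atBot (nhds (f 0 - ∫ x in Iic 0, f' x)) := by
    have h1 : Tendsto (fun a => ∫ x in a..(0:ℝ), f' x) atBot (nhds (∫ x in Iic 0, f' x)) :=
      intervalIntegral_tendsto_integral_Iic 0 hf'.integrableOn tendsto_id
    have : (fun a => f 0 - ∫ x in a..(0:ℝ), f' x) = f := by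
      funext a; rw [← hfc a 0]; ring
    rw [show f 0 - ∫ x in Iic 0, f' x = f 0 - ∫ x in Iic 0, f' x from rfl]
    simpa [this] using (h1.const_sub (f 0))
  have htop0 := limit_zero_of_integrable_atTop hf htop
  have hbot0 := limit_zero_of_integrable_atBot hf hbot
  have h1 : ∫ x in Ioi 0, f' x = -f 0 := by linarith
  have h2 : ∫ x in Iic 0, f' x = f 0 := by linarith
  rw [← intervalIntegral.integral_Iic_add_Ioi (b := (0:ℝ)) hf'.integrableOn hf'.integrableOn, h1, h2]
  ring

/-- Cauchy–Schwarz for a nonnegative weight. -/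
lemma cs_weight {f w : ℝ → ℝ} (hw : ∀ x, 0 ≤ w x)
    (h1 : Integrable (fun x => f x * w x)) (h2 : Integrable (fun x => f x ^ 2 * w x))
    (hwi : Integrable w) :
    (∫ x, f x * w x) ^ 2 ≤ (∫ x, f x ^ 2 * w x) * ∫ x, w x := by
  set A := ∫ x, f x ^ 2 * w x with hA
  set B := ∫ x, f x * w x with hB
  set C := ∫ x, w x with hC
  have hCnn : 0 ≤ C := integral_nonneg hw
  rcases eq_or_lt_of_le hCnn with hC0 | hCpos
  · -- C = 0 : w = 0 a.e. hence B = 0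
    have hw0 : w =ᵐ[volume] 0 := (integral_eq_zero_iff_of_nonneg hw hwi).mp hC0.symm
    have hB0 : B = 0 := by
      rw [hB]
      rw [integral_eq_zero_iff_of_nonneg_ae ?_ h1]
      · filter_upwards [hw0] with x hx; simp [hx]
      · filter_upwards [hw0] with x hx; simp [hx]
    have hAnn : 0 ≤ A := integral_nonneg fun x => mul_nonneg (sq_nonneg _) (hw x)
    nlinarith
  · set t := B / C with ht
    have key : 0 ≤ A - 2 * t * B + t ^ 2 * C := by
      have expand : (fun x => (f x - t) ^ 2 * w x)
          = fun x => f x ^ 2 * w x - 2 * t * (f x * w x) + t ^ 2 * w x := by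
        funext x; ring
      have hnn : 0 ≤ ∫ x, (f x - t) ^ 2 * w x :=
        integral_nonneg fun x => mul_nonneg (sq_nonneg _) (hw x)
      rw [expand] at hnn
      have e1 : ∫ x, (f x ^ 2 * w x - 2 * t * (f x * w x) + t ^ 2 * w x)
          = ((∫ x, (f x ^ 2 * w x - 2 * t * (f x * w x))) + ∫ x, t ^ 2 * w x) :=
        integral_add (h2.sub (h1.const_mul _)) (hwi.const_mul _)
      have e2 : ∫ x, (f x ^ 2 * w x - 2 * t * (f x * w x))
          = ((∫ x, f x ^ 2 * w x) - ∫ x, 2 * t * (f x * w x)) :=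
        integral_sub h2 (h1.const_mul _)
      rw [e1, e2, integral_const_mul, integral_const_mul] at hnn
      exact hnn
    have hCne : C ≠ 0 := ne_of_gt hCpos
    have ht2 : t * C = B := by rw [ht, div_mul_cancel₀ B hCne]
    nlinarith [key, sq_nonneg (B / C)]

section Gauss
variable {σ : ℝ}

lemma gauss_eq (hσ : 0 < σ) (z : ℝ) :
    (1 / (σ * Real.sqrt (2 * Real.pi))) * Real.exp (-z ^ 2 / (2 * σ ^ 2))
      = (1 / (σ * Real.sqrt (2 * Real.pi))) * Real.exp (-(1 / (2 * σ ^ 2)) * z ^ 2) := by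
  have h2 : (2 : ℝ) * σ ^ 2 ≠ 0 := by positivity
  congr 1
  rw [neg_div, neg_mul]
  congr 1
  field_simp

lemma gauss_integrable (hσ : 0 < σ) :
    Integrable (fun z => (1 / (σ * Real.sqrt (2 * Real.pi))) *
      Real.exp (-z ^ 2 / (2 * σ ^ 2))) := by
  have hb : 0 < 1 / (2 * σ ^ 2) := by positivity
  have := (integrable_exp_neg_mul_sq hb).const_mul (1 / (σ * Real.sqrt (2 * Real.pi)))
  refine this.congr ?_
  filter_upwards with z
  rw [gauss_eq hσ]

lemma gauss_integral (hσ : 0 < σ) :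
    ∫ z, (1 / (σ * Real.sqrt (2 * Real.pi))) * Real.exp (-z ^ 2 / (2 * σ ^ 2)) = 1 := by
  have hb : 0 < 1 / (2 * σ ^ 2) := by positivity
  have h1 : ∫ z, (1 / (σ * Real.sqrt (2 * Real.pi))) * Real.exp (-z ^ 2 / (2 * σ ^ 2))
      = (1 / (σ * Real.sqrt (2 * Real.pi))) * ∫ z, Real.exp (-(1 / (2 * σ ^ 2)) * z ^ 2) := by
    rw [← integral_const_mul]
    congr 1; funext z; rw [gauss_eq hσ]
  rw [h1, integral_gaussian]
  rw [show Real.pi / (1 / (2 * σ ^ 2)) = (2 * Real.pi) * σ ^ 2 by field_simp]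
  rw [Real.sqrt_mul (by positivity) (σ ^ 2), Real.sqrt_sq hσ.le]
  have hs : 0 < Real.sqrt (2 * Real.pi) := Real.sqrt_pos.mpr (by positivity)
  field_simp

lemma gauss_hasDerivAt (hσ : 0 < σ) (z : ℝ) :
    HasDerivAt (fun z => (1 / (σ * Real.sqrt (2 * Real.pi))) *
        Real.exp (-z ^ 2 / (2 * σ ^ 2)))
      (-(z / σ ^ 2) * ((1 / (σ * Real.sqrt (2 * Real.pi))) *
        Real.exp (-z ^ 2 / (2 * σ ^ 2)))) z := by
  have hne : (2 : ℝ) * σ ^ 2 ≠ 0 := by positivity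
  have h1 : HasDerivAt (fun z : ℝ => -z ^ 2 / (2 * σ ^ 2)) (-(z / σ ^ 2)) z := by
    have := ((hasDerivAt_pow 2 z).neg).div_const (2 * σ ^ 2)
    refine this.congr_deriv ?_
    field_simp
    ring
  have h2 := (h1.exp).const_mul (1 / (σ * Real.sqrt (2 * Real.pi)))
  refine h2.congr_deriv ?_
  ring

lemma gauss_abs_mul_exp_le (hσ : 0 < σ) (z : ℝ) :
    |z| * Real.exp (-z ^ 2 / (2 * σ ^ 2)) ≤ σ := by
  have h1 : z ^ 2 / (2 * σ ^ 2) + 1 ≤ Real.exp (z ^ 2 / (2 * σ ^ 2)) :=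
    Real.add_one_le_exp _
  have hu : 2 * σ ^ 2 * (z ^ 2 / (2 * σ ^ 2)) = z ^ 2 := by field_simp
  have h1' := mul_le_mul_of_nonneg_left h1 (show (0:ℝ) ≤ 2 * σ ^ 2 by positivity)
  have h2 : |z| ≤ σ * Real.exp (z ^ 2 / (2 * σ ^ 2)) := by
    nlinarith [sq_abs z, sq_nonneg (|z| - σ), abs_nonneg z, hσ]
  have h3 : |z| * Real.exp (-z ^ 2 / (2 * σ ^ 2))
      = |z| / Real.exp (z ^ 2 / (2 * σ ^ 2)) := by
    rw [neg_div, Real.exp_neg]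
    ring
  rw [h3, div_le_iff₀ (Real.exp_pos _)]
  linarith [h2]

lemma gauss_deriv_bound (hσ : 0 < σ) (z : ℝ) :
    |(-(z / σ ^ 2)) * ((1 / (σ * Real.sqrt (2 * Real.pi))) *
        Real.exp (-z ^ 2 / (2 * σ ^ 2)))|
      ≤ 1 / (σ ^ 2 * Real.sqrt (2 * Real.pi)) := by
  have hs : 0 < Real.sqrt (2 * Real.pi) := Real.sqrt_pos.mpr (by positivity)
  have hE : 0 < Real.exp (-z ^ 2 / (2 * σ ^ 2)) := Real.exp_pos _
  have habs : |(-(z / σ ^ 2)) * ((1 / (σ * Real.sqrt (2 * Real.pi))) *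
        Real.exp (-z ^ 2 / (2 * σ ^ 2)))|
      = (|z| * Real.exp (-z ^ 2 / (2 * σ ^ 2))) / (σ ^ 2 * (σ * Real.sqrt (2 * Real.pi))) := by
    rw [abs_mul, abs_neg, abs_div, abs_of_pos (show (0:ℝ) < σ ^ 2 by positivity),
      abs_of_pos (show (0:ℝ) < (1 / (σ * Real.sqrt (2 * Real.pi))) *
        Real.exp (-z ^ 2 / (2 * σ ^ 2)) by positivity)]
    field_simp
  rw [habs]
  have h4 : (|z| * Real.exp (-z ^ 2 / (2 * σ ^ 2))) / (σ ^ 2 * (σ * Real.sqrt (2 * Real.pi)))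
      ≤ σ / (σ ^ 2 * (σ * Real.sqrt (2 * Real.pi))) := by
    gcongr
    exact gauss_abs_mul_exp_le hσ z
  refine h4.trans_eq ?_
  field_simp

lemma gauss_sq_integrable (hσ : 0 < σ) :
    Integrable (fun z => z ^ 2 * ((1 / (σ * Real.sqrt (2 * Real.pi))) *
      Real.exp (-z ^ 2 / (2 * σ ^ 2)))) := by
  have hb : 0 < 1 / (2 * σ ^ 2) := by positivity
  have h0 := (integrable_rpow_mul_exp_neg_mul_sq hb (s := 2) (by norm_num)).const_mul
    (1 / (σ * Real.sqrt (2 * Real.pi)))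
  refine h0.congr ?_
  filter_upwards with z
  rw [gauss_eq hσ]
  rw [show (z : ℝ) ^ (2 : ℝ) = z ^ (2 : ℕ) by
    rw [← Real.rpow_natCast z 2]; norm_num]
  ring

lemma gauss_mul_integrable (hσ : 0 < σ) :
    Integrable (fun z => z * ((1 / (σ * Real.sqrt (2 * Real.pi))) *
      Real.exp (-z ^ 2 / (2 * σ ^ 2)))) := by
  have hb : 0 < 1 / (2 * σ ^ 2) := by positivity
  have h0 := (integrable_mul_exp_neg_mul_sq hb).const_mul (1 / (σ * Real.sqrt (2 * Real.pi)))
  refine h0.congr ?_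
  filter_upwards with z
  rw [gauss_eq hσ]
  ring

lemma gauss_moment (hσ : 0 < σ) :
    ∫ z, z ^ 2 * ((1 / (σ * Real.sqrt (2 * Real.pi))) *
      Real.exp (-z ^ 2 / (2 * σ ^ 2))) = σ ^ 2 := by
  set φ : ℝ → ℝ := fun z => (1 / (σ * Real.sqrt (2 * Real.pi))) *
    Real.exp (-z ^ 2 / (2 * σ ^ 2)) with hφdef
  have hσ2 : (σ : ℝ) ^ 2 ≠ 0 := by positivity
  have hder : ∀ z, HasDerivAt (fun z => z * φ z)
      (φ z - (1 / σ ^ 2) * (z ^ 2 * φ z)) z := by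
    intro z
    have := (hasDerivAt_id z).mul (gauss_hasDerivAt hσ z)
    refine this.congr_deriv ?_
    simp only [hφdef, id]
    field_simp
    ring
  have hzero : ∫ z, (φ z - (1 / σ ^ 2) * (z ^ 2 * φ z)) = 0 :=
    integral_deriv_eq_zero_of_integrable hder (gauss_mul_integrable hσ)
      ((gauss_integrable hσ).sub ((gauss_sq_integrable hσ).const_mul _))
  rw [integral_sub (gauss_integrable hσ) ((gauss_sq_integrable hσ).const_mul _),
    gauss_integral hσ, integral_const_mul] at hzero
  have : (1 / σ ^ 2) * ∫ z, z ^ 2 * φ z = 1 := by linarith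
  field_simp at this
  linarith

end Gauss

/-- Fisher information decreases under Gaussian smoothing: if `X` has smooth positive density
`pX` with finite Fisher information, and `Z ~ N(0,σ²)` is independent of `X`, then the Fisher
information of `X + Z` satisfies `I(X+Z) ≤ min(I(X), 1/σ²)`. -/
theorem fisher_info_gaussian_smoothing (σ : ℝ) (hσ : 0 < σ)
    (pX : ℝ → ℝ) (hX : ContDiff ℝ (⊤ : ℕ∞) pX) (hXpos : ∀ x, 0 < pX x)
    (hXdens : ∫ x, pX x = 1)
    (hIX : Integrable (fun x => (deriv pX x / pX x) ^ 2 * pX x))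
    (φ pY : ℝ → ℝ)
    (hφ : ∀ z, φ z = (1 / (σ * Real.sqrt (2 * Real.pi))) *
        Real.exp (-z ^ 2 / (2 * σ ^ 2)))
    (hpY : ∀ y, pY y = ∫ x, pX x * φ (y - x)) :
    ∫ y, (deriv pY y / pY y) ^ 2 * pY y ≤
      min (∫ x, (deriv pX x / pX x) ^ 2 * pX x) (1 / σ ^ 2) := by
  have hφeq : φ = fun z => (1 / (σ * Real.sqrt (2 * Real.pi))) *
      Real.exp (-z ^ 2 / (2 * σ ^ 2)) := funext hφ
  set c : ℝ := 1 / (σ * Real.sqrt (2 * Real.pi)) with hc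
  set c2 : ℝ := 1 / (σ ^ 2 * Real.sqrt (2 * Real.pi)) with hc2
  have hcpos : 0 < c := by rw [hc]; positivity
  -- facts about φ
  have hφ_pos : ∀ z, 0 < φ z := fun z => by rw [hφ z]; positivity
  have hφ_cont : Continuous φ := by
    rw [hφeq]; fun_prop
  have hφ_int : Integrable φ := hφeq ▸ gauss_integrable hσ
  have hφ_one : ∫ z, φ z = 1 := by rw [hφeq]; exact gauss_integral hσ
  set dφ : ℝ → ℝ := fun z => -(z / σ ^ 2) * φ z with hdφdef
  have hφ_deriv : ∀ z, HasDerivAt φ (dφ z) z := by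
    intro z
    simp only [hdφdef, hφeq]
    exact gauss_hasDerivAt hσ z
  have hdφ_cont : Continuous dφ := by
    simp only [hdφdef]; fun_prop
  have hdφ_bound : ∀ z, |dφ z| ≤ c2 := by
    intro z
    simp only [hdφdef, hφeq, hc2]
    exact gauss_deriv_bound hσ z
  have hφ_bound : ∀ z, φ z ≤ c := by
    intro z
    rw [hφ z]
    nlinarith [Real.exp_le_one_iff.mpr (div_nonpos_of_nonpos_of_nonneg
      (neg_nonpos.mpr (sq_nonneg z)) (by positivity : (0:ℝ) ≤ 2 * σ ^ 2)), hcpos]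
  have hφ_sq_int : Integrable (fun z => z ^ 2 * φ z) := hφeq ▸ gauss_sq_integrable hσ
  have hφ_moment : ∫ z, z ^ 2 * φ z = σ ^ 2 := hφeq ▸ gauss_moment hσ
  -- facts about pX
  have hpX_int : Integrable pX := integrable_of_integral_eq_one hXdens
  have hpX_cont : Continuous pX := hX.continuous
  have hpX'_cont : Continuous (deriv pX) := hX.continuous_deriv (by simp)
  have hpX'_int : Integrable (deriv pX) := by
    refine Integrable.mono' ((hIX.add hpX_int).const_mul (1/2))
      hpX'_cont.aestronglyMeasurable ?_
    filter_upwards with x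
    have hp := hXpos x
    have habs : |deriv pX x| = |deriv pX x / pX x| * pX x := by
      rw [abs_div, abs_of_pos hp]
      field_simp
    simp only [Pi.add_apply]
    rw [Real.norm_eq_abs, habs]
    nlinarith [sq_abs (deriv pX x / pX x), sq_nonneg (|deriv pX x / pX x| - 1), hp]
  -- integrability of convolution-type integrands
  have hY_int : ∀ y, Integrable (fun x => pX x * φ (y - x)) := by
    intro y
    have := Integrable.bdd_mul hpX_int
      ((hφ_cont.comp ((continuous_const.sub continuous_id) : Continuous fun x : ℝ => y - x)).aestronglyMeasurable)
      (c := c) (Filter.Eventually.of_forall fun x => by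
        simp only [Function.comp_apply]
        rw [Real.norm_eq_abs, abs_of_pos (hφ_pos _)]; exact hφ_bound _)
    exact this.congr (Filter.Eventually.of_forall fun x => mul_comm _ _)
  have hY'_int : ∀ y, Integrable (fun x => pX x * dφ (y - x)) := by
    intro y
    have := Integrable.bdd_mul hpX_int
      ((hdφ_cont.comp ((continuous_const.sub continuous_id) : Continuous fun x : ℝ => y - x)).aestronglyMeasurable)
      (c := c2) (Filter.Eventually.of_forall fun x => by
        simp only [Function.comp_apply]
        rw [Real.norm_eq_abs]; exact hdφ_bound _)
    exact this.congr (Filter.Eventually.of_forall fun x => mul_comm _ _)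
  have hY''_int : ∀ y, Integrable (fun x => deriv pX x * φ (y - x)) := by
    intro y
    have := Integrable.bdd_mul hpX'_int
      ((hφ_cont.comp ((continuous_const.sub continuous_id) : Continuous fun x : ℝ => y - x)).aestronglyMeasurable)
      (c := c) (Filter.Eventually.of_forall fun x => by
        simp only [Function.comp_apply]
        rw [Real.norm_eq_abs, abs_of_pos (hφ_pos _)]; exact hφ_bound _)
    exact this.congr (Filter.Eventually.of_forall fun x => mul_comm _ _)
  -- positivity of pY
  have hpY_pos : ∀ y, 0 < pY y := by
    intro y
    rw [hpY y]
    rw [integral_pos_iff_support_of_nonneg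
      (fun x => le_of_lt (mul_pos (hXpos x) (hφ_pos _))) (hY_int y)]
    have hsupp : Function.support (fun x => pX x * φ (y - x)) = Set.univ :=
      Set.eq_univ_of_forall fun x => (mul_pos (hXpos x) (hφ_pos _)).ne'
    rw [hsupp]
    simp
  -- derivative of pY
  set g : ℝ → ℝ := fun y => ∫ x, pX x * dφ (y - x) with hgdef
  have hgd : ∀ y, HasDerivAt pY (g y) y := by
    intro y₀
    have key := hasDerivAt_integral_of_dominated_loc_of_deriv_le
      (F := fun y x => pX x * φ (y - x)) (F' := fun y x => pX x * dφ (y - x))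
      (x₀ := y₀) (bound := fun x => pX x * c2) (s := Metric.ball y₀ 1) (Metric.ball_mem_nhds y₀ one_pos)
      (Filter.Eventually.of_forall fun y =>
        ((hpX_cont.mul (hφ_cont.comp (continuous_const.sub continuous_id))).aestronglyMeasurable))
      (hY_int y₀)
      ((hpX_cont.mul (hdφ_cont.comp (continuous_const.sub continuous_id))).aestronglyMeasurable)
      (Filter.Eventually.of_forall fun x => fun y _ => by
        rw [Real.norm_eq_abs, abs_mul, abs_of_pos (hXpos x)]
        exact mul_le_mul_of_nonneg_left (hdφ_bound _) (hXpos x).le)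
      (hpX_int.mul_const c2)
      (Filter.Eventually.of_forall fun x => fun y _ => by
        have h := ((hφ_deriv (y - x)).comp y ((hasDerivAt_id y).sub_const x)).const_mul (pX x)
        simpa using h)
    have hfun : pY = fun y => ∫ x, pX x * φ (y - x) := funext hpY
    rw [hfun]
    exact key.2
  have hpY_deriv : ∀ y, deriv pY y = g y := fun y => (hgd y).deriv
  -- integration by parts : g y = ∫ deriv pX * φ(y - ·)
  have hgrep : ∀ y, g y = ∫ x, deriv pX x * φ (y - x) := by
    intro y
    have hu : ∀ x, HasDerivAt (fun x => pX x * φ (y - x))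
        (deriv pX x * φ (y - x) - pX x * dφ (y - x)) x := by
      intro x
      have h1 : HasDerivAt pX (deriv pX x) x := (hX.differentiable (by simp) x).hasDerivAt
      have h2 : HasDerivAt (fun x => φ (y - x)) (-dφ (y - x)) x := by
        have := (hφ_deriv (y - x)).comp x ((hasDerivAt_id x).const_sub y)
        simp only [mul_neg, mul_one] at this; exact this
      have := h1.mul h2
      refine this.congr_deriv ?_
      ring
    have h0 := integral_deriv_eq_zero_of_integrable hu (hY_int y)
      ((hY''_int y).sub (hY'_int y))
    rw [integral_sub (hY''_int y) (hY'_int y), sub_eq_zero] at h0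
    rw [hgdef]
    exact h0.symm
  -- product integrability for Fubini, bound 1
  have hfub1 : Integrable (Function.uncurry fun x y =>
      (deriv pX x / pX x) ^ 2 * pX x * φ (y - x)) ((volume : Measure ℝ).prod volume) := by
    rw [integrable_prod_iff]
    · constructor
      · refine Filter.Eventually.of_forall fun x => ?_
        simp only [Function.uncurry_apply_pair]
        exact (hφ_int.comp_sub_right x).const_mul _
      · have heq : (fun x => ∫ y, ‖Function.uncurry (fun x y =>
            (deriv pX x / pX x) ^ 2 * pX x * φ (y - x)) (x, y)‖)
            = fun x => (deriv pX x / pX x) ^ 2 * pX x := by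
          funext x
          simp only [Function.uncurry_apply_pair]
          have h1 : ∀ y, ‖(deriv pX x / pX x) ^ 2 * pX x * φ (y - x)‖
              = (deriv pX x / pX x) ^ 2 * pX x * φ (y - x) := fun y =>
            Real.norm_of_nonneg (mul_nonneg (mul_nonneg (sq_nonneg _) (hXpos x).le)
              (hφ_pos _).le)
          simp_rw [h1]
          rw [integral_const_mul, integral_sub_right_eq_self φ x, hφ_one, mul_one]
        rw [heq]
        exact hIX
    · apply Continuous.aestronglyMeasurable
      apply Continuous.mul
      · apply Continuous.mul
        · exact ((hpX'_cont.comp continuous_fst).div (hpX_cont.comp continuous_fst)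
            (fun p => (hXpos _).ne')).pow 2
        · exact hpX_cont.comp continuous_fst
      · exact hφ_cont.comp (continuous_snd.sub continuous_fst)
  -- product integrability for Fubini, bound 2
  have hq_int : ∀ x : ℝ, Integrable (fun z => (z / σ ^ 2) ^ 2 * (pX x * φ z)) := by
    intro x
    have := hφ_sq_int.const_mul (pX x / σ ^ 4)
    refine this.congr (Filter.Eventually.of_forall fun z => ?_)
    have : (σ : ℝ) ^ 4 ≠ 0 := by positivity
    field_simp
  have hq_val : ∀ x : ℝ, ∫ z, (z / σ ^ 2) ^ 2 * (pX x * φ z) = pX x / σ ^ 2 := by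
    intro x
    have heq : (fun z => (z / σ ^ 2) ^ 2 * (pX x * φ z))
        = fun z => (pX x / σ ^ 4) * (z ^ 2 * φ z) := by
      funext z
      have : (σ : ℝ) ^ 4 ≠ 0 := by positivity
      field_simp
    rw [heq, integral_const_mul, hφ_moment]
    have h2 : (σ : ℝ) ^ 2 ≠ 0 := by positivity
    field_simp
  have hfub2 : Integrable (Function.uncurry fun x y =>
      ((y - x) / σ ^ 2) ^ 2 * (pX x * φ (y - x))) ((volume : Measure ℝ).prod volume) := by
    rw [integrable_prod_iff]
    · constructor
      · refine Filter.Eventually.of_forall fun x => ?_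
        simp only [Function.uncurry_apply_pair]
        exact (hq_int x).comp_sub_right x
      · have heq : (fun x => ∫ y, ‖Function.uncurry (fun x y =>
            ((y - x) / σ ^ 2) ^ 2 * (pX x * φ (y - x))) (x, y)‖)
            = fun x => pX x / σ ^ 2 := by
          funext x
          simp only [Function.uncurry_apply_pair]
          have h1 : ∀ y, ‖((y - x) / σ ^ 2) ^ 2 * (pX x * φ (y - x))‖
              = ((y - x) / σ ^ 2) ^ 2 * (pX x * φ (y - x)) := fun y =>
            Real.norm_of_nonneg (mul_nonneg (sq_nonneg _)
              (mul_pos (hXpos x) (hφ_pos _)).le)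
          simp_rw [h1]
          rw [integral_sub_right_eq_self (fun z => (z / σ ^ 2) ^ 2 * (pX x * φ z)) x]
          exact hq_val x
        rw [heq]
        exact hpX_int.div_const _
    · apply Continuous.aestronglyMeasurable
      apply Continuous.mul
      · exact (((continuous_snd.sub continuous_fst).div_const _).pow 2)
      · exact (hpX_cont.comp continuous_fst).mul
          (hφ_cont.comp (continuous_snd.sub continuous_fst))
  -- Fubini computations
  have key1 : ∫ y, (∫ x, (deriv pX x / pX x) ^ 2 * pX x * φ (y - x))
      = ∫ x, (deriv pX x / pX x) ^ 2 * pX x := by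
    rw [← integral_integral_swap hfub1]
    have heq : ∀ x : ℝ, ∫ y, (deriv pX x / pX x) ^ 2 * pX x * φ (y - x)
        = (deriv pX x / pX x) ^ 2 * pX x := by
      intro x
      rw [integral_const_mul, integral_sub_right_eq_self φ x, hφ_one, mul_one]
    exact integral_congr_ae (Filter.Eventually.of_forall heq)
  have key2 : ∫ y, (∫ x, ((y - x) / σ ^ 2) ^ 2 * (pX x * φ (y - x))) = 1 / σ ^ 2 := by
    rw [← integral_integral_swap hfub2]
    have heq : ∀ x : ℝ, ∫ y, ((y - x) / σ ^ 2) ^ 2 * (pX x * φ (y - x)) = pX x / σ ^ 2 := by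
      intro x
      rw [integral_sub_right_eq_self (fun z => (z / σ ^ 2) ^ 2 * (pX x * φ z)) x]
      exact hq_val x
    rw [integral_congr_ae (Filter.Eventually.of_forall heq), integral_div, hXdens]
  -- pointwise (a.e.) bounds via Cauchy-Schwarz
  have hbd1 : ∀ᵐ y : ℝ, (deriv pY y / pY y) ^ 2 * pY y
      ≤ ∫ x, (deriv pX x / pX x) ^ 2 * pX x * φ (y - x) := by
    filter_upwards [hfub1.prod_left_ae] with y hsec
    simp only [Function.uncurry_apply_pair] at hsec
    have h2 : Integrable (fun x => (deriv pX x / pX x) ^ 2 * (pX x * φ (y - x))) :=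
      hsec.congr (Filter.Eventually.of_forall fun x => by ring)
    have h1 : Integrable (fun x => (deriv pX x / pX x) * (pX x * φ (y - x))) :=
      (hY''_int y).congr (Filter.Eventually.of_forall fun x => by
        field_simp [(hXpos x).ne'])
    have hcs := cs_weight (f := fun x => deriv pX x / pX x)
      (w := fun x => pX x * φ (y - x))
      (fun x => le_of_lt (mul_pos (hXpos x) (hφ_pos _))) h1 h2 (hY_int y)
    have hD : deriv pY y = ∫ x, (deriv pX x / pX x) * (pX x * φ (y - x)) := by
      rw [hpY_deriv y, hgrep y]
      refine integral_congr_ae (Filter.Eventually.of_forall fun x => ?_)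
      field_simp [(hXpos x).ne']
    have hP : pY y = ∫ x, pX x * φ (y - x) := hpY y
    have hPpos : 0 < pY y := hpY_pos y
    have hfin : ∫ x, (deriv pX x / pX x) ^ 2 * pX x * φ (y - x)
        = ∫ x, (deriv pX x / pX x) ^ 2 * (pX x * φ (y - x)) := by
      refine integral_congr_ae (Filter.Eventually.of_forall fun x => ?_)
      ring
    rw [hfin, show (deriv pY y / pY y) ^ 2 * pY y = (deriv pY y) ^ 2 / pY y from by
      field_simp [hPpos.ne'], div_le_iff₀ hPpos]
    calc (deriv pY y) ^ 2 = (∫ x, (deriv pX x / pX x) * (pX x * φ (y - x))) ^ 2 := by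
          rw [hD]
      _ ≤ (∫ x, (deriv pX x / pX x) ^ 2 * (pX x * φ (y - x))) * ∫ x, pX x * φ (y - x) := hcs
      _ = (∫ x, (deriv pX x / pX x) ^ 2 * (pX x * φ (y - x))) * pY y := by rw [← hP]
  have hbd2 : ∀ᵐ y : ℝ, (deriv pY y / pY y) ^ 2 * pY y
      ≤ ∫ x, ((y - x) / σ ^ 2) ^ 2 * (pX x * φ (y - x)) := by
    filter_upwards [hfub2.prod_left_ae] with y hsec
    simp only [Function.uncurry_apply_pair] at hsec
    have h2 : Integrable (fun x => (-((y - x) / σ ^ 2)) ^ 2 * (pX x * φ (y - x))) :=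
      hsec.congr (Filter.Eventually.of_forall fun x => by ring)
    have h1 : Integrable (fun x => (-((y - x) / σ ^ 2)) * (pX x * φ (y - x))) :=
      (hY'_int y).congr (Filter.Eventually.of_forall fun x => by
        simp only [hdφdef]; ring)
    have hcs := cs_weight (f := fun x => -((y - x) / σ ^ 2))
      (w := fun x => pX x * φ (y - x))
      (fun x => le_of_lt (mul_pos (hXpos x) (hφ_pos _))) h1 h2 (hY_int y)
    have hD : deriv pY y = ∫ x, (-((y - x) / σ ^ 2)) * (pX x * φ (y - x)) := by
      rw [hpY_deriv y, hgdef]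
      refine integral_congr_ae (Filter.Eventually.of_forall fun x => ?_)
      simp only [hdφdef]
      ring
    have hP : pY y = ∫ x, pX x * φ (y - x) := hpY y
    have hPpos : 0 < pY y := hpY_pos y
    have hfin : ∫ x, ((y - x) / σ ^ 2) ^ 2 * (pX x * φ (y - x))
        = ∫ x, (-((y - x) / σ ^ 2)) ^ 2 * (pX x * φ (y - x)) := by
      refine integral_congr_ae (Filter.Eventually.of_forall fun x => ?_)
      ring
    rw [hfin, show (deriv pY y / pY y) ^ 2 * pY y = (deriv pY y) ^ 2 / pY y from by
      field_simp [hPpos.ne'], div_le_iff₀ hPpos]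
    calc (deriv pY y) ^ 2 = (∫ x, (-((y - x) / σ ^ 2)) * (pX x * φ (y - x))) ^ 2 := by
          rw [hD]
      _ ≤ (∫ x, (-((y - x) / σ ^ 2)) ^ 2 * (pX x * φ (y - x))) * ∫ x, pX x * φ (y - x) := hcs
      _ = (∫ x, (-((y - x) / σ ^ 2)) ^ 2 * (pX x * φ (y - x))) * pY y := by rw [← hP]
  -- conclusion
  have hnn : ∀ᵐ y : ℝ, 0 ≤ (deriv pY y / pY y) ^ 2 * pY y :=
    Filter.Eventually.of_forall fun y => mul_nonneg (sq_nonneg _) (hpY_pos y).le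
  have hint1 : Integrable (fun y => ∫ x, (deriv pX x / pX x) ^ 2 * pX x * φ (y - x)) := by
    have := hfub1.integral_prod_right
    simpa only [Function.uncurry_apply_pair] using this
  have hint2 : Integrable (fun y => ∫ x, ((y - x) / σ ^ 2) ^ 2 * (pX x * φ (y - x))) := by
    have := hfub2.integral_prod_right
    simpa only [Function.uncurry_apply_pair] using this
  refine le_min ?_ ?_
  · calc ∫ y, (deriv pY y / pY y) ^ 2 * pY y
        ≤ ∫ y, (∫ x, (deriv pX x / pX x) ^ 2 * pX x * φ (y - x)) :=
          integral_mono_of_nonneg hnn hint1 hbd1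
      _ = ∫ x, (deriv pX x / pX x) ^ 2 * pX x := key1
  · calc ∫ y, (deriv pY y / pY y) ^ 2 * pY y
        ≤ ∫ y, (∫ x, ((y - x) / σ ^ 2) ^ 2 * (pX x * φ (y - x))) :=
          integral_mono_of_nonneg hnn hint2 hbd2
      _ = 1 / σ ^ 2 := key2
end

section
/- The bound I(X + Z) ≤ 1/σ² for Z ~ N(0,σ²) independent of X is strict whenever X is not almost surely constant. -/
open Real MeasureTheory Filter Set

namespace FisherAux

/-- The Gaussian density with mean 0 and standard deviation `σ`. -/
noncomputable def gauss (σ : ℝ) (z : ℝ) : ℝ :=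
  (1 / (σ * Real.sqrt (2 * Real.pi))) * Real.exp (-z ^ 2 / (2 * σ ^ 2))

lemma sqrt2pi_pos : 0 < Real.sqrt (2 * Real.pi) :=
  Real.sqrt_pos.2 (by positivity)

lemma gauss_pos {σ : ℝ} (hσ : 0 < σ) (z : ℝ) : 0 < gauss σ z := by
  unfold gauss
  have := sqrt2pi_pos
  positivity

lemma gauss_cont (σ : ℝ) : Continuous (gauss σ) := by
  unfold gauss
  fun_prop

lemma gauss_cont2 (σ : ℝ) : Continuous (fun q : ℝ × ℝ => gauss σ (q.2 - q.1)) :=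
  (gauss_cont σ).comp (continuous_snd.sub continuous_fst)

lemma hasDerivAt_gauss {σ : ℝ} (hσ : 0 < σ) (z : ℝ) :
    HasDerivAt (gauss σ) (-(z / σ ^ 2) * gauss σ z) z := by
  have h1 : HasDerivAt (fun z : ℝ => -z ^ 2 / (2 * σ ^ 2))
      (-(2 * z ^ 1) / (2 * σ ^ 2)) z := by
    have := ((hasDerivAt_pow 2 z).neg).div_const (2 * σ ^ 2)
    simpa using this
  have h2 := (h1.exp).const_mul (1 / (σ * Real.sqrt (2 * Real.pi)))
  refine h2.congr_deriv ?_
  unfold gauss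
  have hσ' : σ ≠ 0 := hσ.ne'
  field_simp

lemma gauss_le {σ : ℝ} (hσ : 0 < σ) (z : ℝ) :
    gauss σ z ≤ 1 / (σ * Real.sqrt (2 * Real.pi)) := by
  unfold gauss
  have h1 : Real.exp (-z ^ 2 / (2 * σ ^ 2)) ≤ 1 := by
    apply Real.exp_le_one_iff.2
    have : (0:ℝ) < 2 * σ ^ 2 := by positivity
    apply div_nonpos_of_nonpos_of_nonneg <;> nlinarith [sq_nonneg z]
  have h2 : (0:ℝ) < 1 / (σ * Real.sqrt (2 * Real.pi)) := by
    have := sqrt2pi_pos; positivity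
  nlinarith [Real.exp_pos (-z ^ 2 / (2 * σ ^ 2))]

lemma abs_exp_bound {σ : ℝ} (hσ : 0 < σ) (z : ℝ) :
    |z| * Real.exp (-z ^ 2 / (2 * σ ^ 2)) ≤ σ := by
  have hb : z ^ 2 / (2 * σ ^ 2) + 1 ≤ Real.exp (z ^ 2 / (2 * σ ^ 2)) := by
    have := Real.add_one_le_exp (z ^ 2 / (2 * σ ^ 2)); linarith
  have hneg : Real.exp (-z ^ 2 / (2 * σ ^ 2)) = (Real.exp (z ^ 2 / (2 * σ ^ 2)))⁻¹ := by
    rw [neg_div, Real.exp_neg]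
  rw [hneg, ← div_eq_mul_inv, div_le_iff₀ (Real.exp_pos _)]
  have h2 : σ * (z ^ 2 / (2 * σ ^ 2) + 1) ≤ σ * Real.exp (z ^ 2 / (2 * σ ^ 2)) :=
    mul_le_mul_of_nonneg_left hb hσ.le
  have h3' : σ * (z ^ 2 / (2 * σ ^ 2) + 1) = z ^ 2 / (2 * σ) + σ := by field_simp
  have h3 : |z| ≤ z ^ 2 / (2 * σ) + σ := by
    rw [← sub_nonneg]
    have he : z ^ 2 / (2 * σ) + σ - |z| = (z ^ 2 - 2 * σ * |z| + 2 * σ ^ 2) / (2 * σ) := by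
      field_simp; ring
    rw [he]
    apply div_nonneg _ (by positivity)
    nlinarith [sq_abs z, sq_nonneg (|z| - σ)]
  calc |z| ≤ z ^ 2 / (2 * σ) + σ := h3
    _ = σ * (z ^ 2 / (2 * σ ^ 2) + 1) := h3'.symm
    _ ≤ σ * Real.exp (z ^ 2 / (2 * σ ^ 2)) := h2

lemma abs_mul_gauss_le {σ : ℝ} (hσ : 0 < σ) (z : ℝ) :
    |z| * gauss σ z ≤ σ * (1 / (σ * Real.sqrt (2 * Real.pi))) := by
  unfold gauss
  have h := abs_exp_bound hσ z
  have h2 : (0:ℝ) < 1 / (σ * Real.sqrt (2 * Real.pi)) := by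
    have := sqrt2pi_pos; positivity
  calc |z| * ((1 / (σ * Real.sqrt (2 * Real.pi))) * Real.exp (-z ^ 2 / (2 * σ ^ 2)))
      = (1 / (σ * Real.sqrt (2 * Real.pi))) * (|z| * Real.exp (-z ^ 2 / (2 * σ ^ 2))) := by ring
    _ ≤ (1 / (σ * Real.sqrt (2 * Real.pi))) * σ := mul_le_mul_of_nonneg_left h h2.le
    _ = σ * (1 / (σ * Real.sqrt (2 * Real.pi))) := by ring

lemma sq_exp_bound {σ : ℝ} (hσ : 0 < σ) (z : ℝ) :
    z ^ 2 * Real.exp (-z ^ 2 / (2 * σ ^ 2)) ≤ 2 * σ ^ 2 := by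
  have hb : z ^ 2 / (2 * σ ^ 2) + 1 ≤ Real.exp (z ^ 2 / (2 * σ ^ 2)) := by
    have := Real.add_one_le_exp (z ^ 2 / (2 * σ ^ 2)); linarith
  have hneg : Real.exp (-z ^ 2 / (2 * σ ^ 2)) = (Real.exp (z ^ 2 / (2 * σ ^ 2)))⁻¹ := by
    rw [neg_div, Real.exp_neg]
  rw [hneg, ← div_eq_mul_inv, div_le_iff₀ (Real.exp_pos _)]
  have h2 : 2 * σ ^ 2 * (z ^ 2 / (2 * σ ^ 2) + 1) ≤ 2 * σ ^ 2 * Real.exp (z ^ 2 / (2 * σ ^ 2)) :=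
    mul_le_mul_of_nonneg_left hb (by positivity)
  have h3 : 2 * σ ^ 2 * (z ^ 2 / (2 * σ ^ 2) + 1) = z ^ 2 + 2 * σ ^ 2 := by
    field_simp
  nlinarith [sq_nonneg σ]

lemma sq_mul_gauss_le {σ : ℝ} (hσ : 0 < σ) (z : ℝ) :
    z ^ 2 * gauss σ z ≤ 2 * σ ^ 2 * (1 / (σ * Real.sqrt (2 * Real.pi))) := by
  unfold gauss
  have h := sq_exp_bound hσ z
  have h2 : (0:ℝ) < 1 / (σ * Real.sqrt (2 * Real.pi)) := by
    have := sqrt2pi_pos; positivity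
  calc z ^ 2 * ((1 / (σ * Real.sqrt (2 * Real.pi))) * Real.exp (-z ^ 2 / (2 * σ ^ 2)))
      = (1 / (σ * Real.sqrt (2 * Real.pi))) * (z ^ 2 * Real.exp (-z ^ 2 / (2 * σ ^ 2))) := by ring
    _ ≤ (1 / (σ * Real.sqrt (2 * Real.pi))) * (2 * σ ^ 2) := mul_le_mul_of_nonneg_left h h2.le
    _ = 2 * σ ^ 2 * (1 / (σ * Real.sqrt (2 * Real.pi))) := by ring

lemma exp_eq_form {σ : ℝ} (hσ : 0 < σ) :
    (fun z : ℝ => Real.exp (-z ^ 2 / (2 * σ ^ 2)))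
      = fun z : ℝ => Real.exp (-(1 / (2 * σ ^ 2)) * z ^ 2) := by
  funext z; congr 1; field_simp

lemma gauss_eq_form {σ : ℝ} (hσ : 0 < σ) :
    gauss σ = fun z : ℝ => (1 / (σ * Real.sqrt (2 * Real.pi)))
      * Real.exp (-(1 / (2 * σ ^ 2)) * z ^ 2) := by
  funext z
  unfold gauss
  rw [show -(1 / (2 * σ ^ 2)) * z ^ 2 = -z ^ 2 / (2 * σ ^ 2) by field_simp]

lemma integrable_gauss {σ : ℝ} (hσ : 0 < σ) : Integrable (gauss σ) := by
  have hb : (0:ℝ) < 1 / (2 * σ ^ 2) := by positivity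
  have h := (integrable_exp_neg_mul_sq hb).const_mul (1 / (σ * Real.sqrt (2 * Real.pi)))
  rw [gauss_eq_form hσ]
  exact h

lemma integrable_sq_exp {b : ℝ} (hb : 0 < b) :
    Integrable (fun x : ℝ => x ^ 2 * Real.exp (-b * x ^ 2)) := by
  have hb2 : (0:ℝ) < b / 2 := by positivity
  have hint := (integrable_exp_neg_mul_sq hb2).const_mul (2 / b)
  apply Integrable.mono' hint
  · exact (Continuous.aestronglyMeasurable (by fun_prop))
  · refine Eventually.of_forall fun x => ?_
    have hsplit : -b * x ^ 2 = -(b / 2) * x ^ 2 + -(b / 2) * x ^ 2 := by ring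
    rw [Real.norm_of_nonneg (by positivity), hsplit, Real.exp_add, ← mul_assoc]
    have h1 : x ^ 2 * Real.exp (-(b / 2) * x ^ 2) ≤ 2 / b := by
      have hexp : (b / 2) * x ^ 2 + 1 ≤ Real.exp ((b / 2) * x ^ 2) := by
        have := Real.add_one_le_exp ((b / 2) * x ^ 2); linarith
      have hinv : Real.exp (-(b / 2) * x ^ 2) * Real.exp ((b / 2) * x ^ 2) = 1 := by
        rw [← Real.exp_add]; ring_nf; exact Real.exp_zero
      have key : x ^ 2 ≤ (2 / b) * Real.exp ((b / 2) * x ^ 2) := by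
        have h2 : (2 / b) * ((b / 2) * x ^ 2 + 1) ≤ (2 / b) * Real.exp ((b / 2) * x ^ 2) :=
          mul_le_mul_of_nonneg_left hexp (by positivity)
        have h3 : (2 / b) * ((b / 2) * x ^ 2 + 1) = x ^ 2 + 2 / b := by field_simp
        have hb3 : (0:ℝ) < 2 / b := by positivity
        linarith
      nlinarith [mul_le_mul_of_nonneg_right key (Real.exp_pos (-(b / 2) * x ^ 2)).le,
        Real.exp_pos (-(b / 2) * x ^ 2), Real.exp_pos ((b / 2) * x ^ 2)]
    have h2 : (0:ℝ) ≤ Real.exp (-(b / 2) * x ^ 2) := (Real.exp_pos _).le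
    calc x ^ 2 * Real.exp (-(b / 2) * x ^ 2) * Real.exp (-(b / 2) * x ^ 2)
        ≤ (2 / b) * Real.exp (-(b / 2) * x ^ 2) := mul_le_mul_of_nonneg_right h1 h2
      _ = 2 / b * Real.exp (-(b / 2) * x ^ 2) := rfl

lemma integral_sq_exp {b : ℝ} (hb : 0 < b) :
    ∫ x : ℝ, x ^ 2 * Real.exp (-b * x ^ 2) = (1 / (2 * b)) * Real.sqrt (π / b) := by
  have hu : ∀ x : ℝ, HasDerivAt (fun x : ℝ => x) 1 x := fun x => hasDerivAt_id x
  have hv : ∀ x : ℝ, HasDerivAt (fun x : ℝ => Real.exp (-b * x ^ 2))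
      (-2 * b * x * Real.exp (-b * x ^ 2)) x := by
    intro x
    have h1 : HasDerivAt (fun x : ℝ => -b * x ^ 2) (-b * (2 * x ^ 1)) x :=
      (hasDerivAt_pow 2 x).const_mul (-b)
    have := h1.exp
    convert this using 1
    ring
  have huv' : Integrable ((fun x : ℝ => x) * fun x : ℝ => -2 * b * x * Real.exp (-b * x ^ 2)) := by
    have h := (integrable_sq_exp hb).const_mul (-2 * b)
    have heq : ((fun x : ℝ => x) * fun x : ℝ => -2 * b * x * Real.exp (-b * x ^ 2))
        = fun x : ℝ => (-2 * b) * (x ^ 2 * Real.exp (-b * x ^ 2)) := by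
      funext x; simp [Pi.mul_apply]; ring
    rw [heq]; exact h
  have hu'v : Integrable ((fun _ : ℝ => (1:ℝ)) * fun x : ℝ => Real.exp (-b * x ^ 2)) := by
    have h := integrable_exp_neg_mul_sq hb
    have heq : ((fun _ : ℝ => (1:ℝ)) * fun x : ℝ => Real.exp (-b * x ^ 2))
        = fun x : ℝ => Real.exp (-b * x ^ 2) := by funext x; simp
    rw [heq]; exact h
  have huv : Integrable ((fun x : ℝ => x) * fun x : ℝ => Real.exp (-b * x ^ 2)) := by
    have h := integrable_mul_exp_neg_mul_sq hb
    have heq : ((fun x : ℝ => x) * fun x : ℝ => Real.exp (-b * x ^ 2))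
        = fun x : ℝ => x * Real.exp (-b * x ^ 2) := by funext x; simp
    rw [heq]; exact h
  have key := integral_mul_deriv_eq_deriv_mul_of_integrable (fun x _ => hu x) (fun x _ => hv x) huv' hu'v huv
  -- key : ∫ x, x * (-2 * b * x * exp (-b x²)) = - ∫ x, 1 * exp (-b x²)
  have lhs_eq : ∫ x : ℝ, x * (-2 * b * x * Real.exp (-b * x ^ 2))
      = (-2 * b) * ∫ x : ℝ, x ^ 2 * Real.exp (-b * x ^ 2) := by
    rw [← integral_const_mul]
    congr 1; funext x; ring
  have rhs_eq : ∫ x : ℝ, (1:ℝ) * Real.exp (-b * x ^ 2) = Real.sqrt (π / b) := by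
    simp only [one_mul]
    exact integral_gaussian b
  rw [lhs_eq, rhs_eq] at key
  have hb' : (-2) * b ≠ 0 := by positivity
  field_simp at key ⊢
  linarith

lemma integrable_sq_gauss {σ : ℝ} (hσ : 0 < σ) :
    Integrable (fun z : ℝ => z ^ 2 * gauss σ z) := by
  have hb : (0:ℝ) < 1 / (2 * σ ^ 2) := by positivity
  have h := ((integrable_sq_exp hb).const_mul (1 / (σ * Real.sqrt (2 * Real.pi))))
  have heq : (fun z : ℝ => z ^ 2 * gauss σ z)
      = fun z : ℝ => (1 / (σ * Real.sqrt (2 * Real.pi)))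
        * (z ^ 2 * Real.exp (-(1 / (2 * σ ^ 2)) * z ^ 2)) := by
    funext z
    unfold gauss
    rw [show -(1 / (2 * σ ^ 2)) * z ^ 2 = -z ^ 2 / (2 * σ ^ 2) by field_simp]
    ring
  rw [heq]; exact h

lemma integral_sq_gauss {σ : ℝ} (hσ : 0 < σ) :
    ∫ z : ℝ, z ^ 2 * gauss σ z = σ ^ 2 := by
  have hb : (0:ℝ) < 1 / (2 * σ ^ 2) := by positivity
  have heq : (fun z : ℝ => z ^ 2 * gauss σ z)
      = fun z : ℝ => (1 / (σ * Real.sqrt (2 * Real.pi)))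
        * (z ^ 2 * Real.exp (-(1 / (2 * σ ^ 2)) * z ^ 2)) := by
    funext z
    unfold gauss
    rw [show -(1 / (2 * σ ^ 2)) * z ^ 2 = -z ^ 2 / (2 * σ ^ 2) by field_simp]
    ring
  rw [heq, integral_const_mul, integral_sq_exp hb]
  have h1 : (1:ℝ) / (2 * (1 / (2 * σ ^ 2))) = σ ^ 2 := by field_simp
  have h2 : Real.sqrt (π / (1 / (2 * σ ^ 2))) = σ * Real.sqrt (2 * π) := by
    rw [show π / (1 / (2 * σ ^ 2)) = σ ^ 2 * (2 * π) by field_simp]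
    rw [Real.sqrt_mul (sq_nonneg σ), Real.sqrt_sq hσ.le]
  rw [h1, h2]
  have h3 : σ * Real.sqrt (2 * π) ≠ 0 := by
    have := sqrt2pi_pos; positivity
  field_simp

lemma eq_dirac_of_compl (μ : Measure ℝ) [IsProbabilityMeasure μ] {c : ℝ}
    (h : μ {x | x ≠ c} = 0) : μ = Measure.dirac c := by
  have hcompl : μ ({c}ᶜ) = 0 := by
    have hset : ({c}ᶜ : Set ℝ) = {x | x ≠ c} := by ext x; simp
    rw [hset]; exact h
  have hc : μ {c} = 1 := by
    have hadd := measure_add_measure_compl (μ := μ) (measurableSet_singleton c)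
    rw [hcompl, add_zero, measure_univ] at hadd
    exact hadd
  ext s hs
  rw [Measure.dirac_apply' _ hs]
  by_cases hcs : c ∈ s
  · rw [Set.indicator_of_mem hcs]
    have h1 : μ {c} ≤ μ s := measure_mono (Set.singleton_subset_iff.2 hcs)
    have h2 : μ s ≤ 1 := prob_le_one
    rw [hc] at h1
    exact le_antisymm h2 h1
  · rw [Set.indicator_of_notMem hcs]
    have hsub : s ⊆ {x | x ≠ c} := fun x hx hxc => hcs (hxc ▸ hx)
    exact measure_mono_null hsub h

end FisherAux

open FisherAux

/-- The bound `I(X + Z) ≤ 1/σ²` for `Z ~ N(0,σ²)` independent of `X` is strict whenever `X`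
(with law `μX` and finite second moment) is not almost surely constant. -/
theorem fisher_info_strict_bound (σ : ℝ) (hσ : 0 < σ)
    (μX : Measure ℝ) [IsProbabilityMeasure μX]
    (hmom : Integrable (fun x => x ^ 2) μX)
    (hnonconst : ∀ c : ℝ, μX ≠ Measure.dirac c)
    (φ pY : ℝ → ℝ)
    (hφ : ∀ z, φ z = (1 / (σ * Real.sqrt (2 * Real.pi))) *
        Real.exp (-z ^ 2 / (2 * σ ^ 2)))
    (hpY : ∀ y, pY y = ∫ x, φ (y - x) ∂μX) :
    ∫ y, (deriv pY y / pY y) ^ 2 * pY y < 1 / σ ^ 2 := by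
  have hσ' : σ ≠ 0 := hσ.ne'
  have hφg : φ = gauss σ := funext fun z => by rw [hφ z]; rfl
  subst hφg
  have hpYfun : pY = fun y => ∫ x, gauss σ (y - x) ∂μX := funext hpY
  subst hpYfun
  set c0 : ℝ := 1 / (σ * Real.sqrt (2 * Real.pi)) with hc0
  have hc0pos : 0 < c0 := by
    have := sqrt2pi_pos; positivity
  -- basic integrability over μX
  have meas_w : ∀ y : ℝ, AEStronglyMeasurable (fun x => gauss σ (y - x)) μX := fun y =>
    ((gauss_cont σ).comp (continuous_const.sub continuous_id)).aestronglyMeasurable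
  have int_w : ∀ y : ℝ, Integrable (fun x => gauss σ (y - x)) μX := by
    intro y
    apply Integrable.mono' (integrable_const c0) (meas_w y)
    refine Eventually.of_forall fun x => ?_
    rw [Real.norm_of_nonneg (gauss_pos hσ _).le]
    exact gauss_le hσ _
  have int_aw : ∀ y : ℝ, Integrable (fun x => (y - x) * gauss σ (y - x)) μX := by
    intro y
    apply Integrable.mono' (integrable_const (σ * c0))
    · exact (((continuous_const.sub continuous_id).mul
        ((gauss_cont σ).comp (continuous_const.sub continuous_id)))).aestronglyMeasurable
    refine Eventually.of_forall fun x => ?_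
    rw [norm_mul, Real.norm_of_nonneg (gauss_pos hσ _).le]
    exact abs_mul_gauss_le hσ _
  have int_a2w : ∀ y : ℝ, Integrable (fun x => (y - x) ^ 2 * gauss σ (y - x)) μX := by
    intro y
    apply Integrable.mono' (integrable_const (2 * σ ^ 2 * c0))
    · exact ((((continuous_const.sub continuous_id).pow 2).mul
        ((gauss_cont σ).comp (continuous_const.sub continuous_id)))).aestronglyMeasurable
    refine Eventually.of_forall fun x => ?_
    rw [norm_mul, Real.norm_of_nonneg (gauss_pos hσ _).le,
      Real.norm_of_nonneg (sq_nonneg _)]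
    exact sq_mul_gauss_le hσ _
  -- positivity of pY
  set pYe : ℝ → ℝ := fun y => ∫ x, gauss σ (y - x) ∂μX with hpYe
  have hp : ∀ y, 0 < pYe y := by
    intro y
    rw [hpYe]
    rw [integral_pos_iff_support_of_nonneg (fun x => (gauss_pos hσ (y - x)).le) (int_w y)]
    have : Function.support (fun x => gauss σ (y - x)) = Set.univ :=
      Set.eq_univ_of_forall fun x => (gauss_pos hσ (y - x)).ne'
    rw [this]
    simp [measure_univ]
  -- mean and second moment functions
  set m : ℝ → ℝ := fun y => ∫ x, (y - x) * gauss σ (y - x) ∂μX with hm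
  set s : ℝ → ℝ := fun y => ∫ x, (y - x) ^ 2 * gauss σ (y - x) ∂μX with hs
  -- derivative of pY
  have hderiv : ∀ y : ℝ, HasDerivAt pYe (-(1 / σ ^ 2) * m y) y := by
    intro y₀
    have key := hasDerivAt_integral_of_dominated_loc_of_deriv_le
      (F := fun y x => gauss σ (y - x))
      (F' := fun y x => -((y - x) / σ ^ 2) * gauss σ (y - x))
      (bound := fun _ => σ * c0 / σ ^ 2)
      (μ := μX) (x₀ := y₀) (s := Metric.ball y₀ 1) (Metric.ball_mem_nhds y₀ one_pos)
      (Eventually.of_forall fun y => meas_w y)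
      (int_w y₀)
      ((((continuous_const.sub continuous_id).div_const _).neg.mul
        ((gauss_cont σ).comp (continuous_const.sub continuous_id))).aestronglyMeasurable)
      ?_ (integrable_const _) ?_
    · obtain ⟨-, hd⟩ := key
      have heq : (∫ x, -((y₀ - x) / σ ^ 2) * gauss σ (y₀ - x) ∂μX) = -(1 / σ ^ 2) * m y₀ := by
        rw [hm, ← integral_const_mul]
        congr 1; funext x; ring
      rw [heq] at hd
      exact hd
    · refine Eventually.of_forall fun x => fun y _ => ?_
      rw [norm_mul, Real.norm_of_nonneg (gauss_pos hσ _).le]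
      have : ‖-((y - x) / σ ^ 2)‖ = |y - x| / σ ^ 2 := by
        rw [norm_neg, Real.norm_eq_abs, abs_div, abs_of_nonneg (sq_nonneg σ)]
      rw [this, div_mul_eq_mul_div]
      apply div_le_div_of_nonneg_right _ (by positivity)
      exact abs_mul_gauss_le hσ _
    · refine Eventually.of_forall fun x => fun y _ => ?_
      have h1 := (hasDerivAt_gauss hσ (y - x)).comp y ((hasDerivAt_id y).sub_const x)
      refine h1.congr_deriv ?_
      simp
  have hderiv' : ∀ y, deriv pYe y = -(1 / σ ^ 2) * m y := fun y => (hderiv y).deriv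
  -- measurability
  have hpY_cont : Continuous pYe := by
    rw [continuous_iff_continuousAt]
    exact fun y => (hderiv y).differentiableAt.continuousAt
  have hm_meas : Measurable m := by
    have heq : m = fun y => (-(σ ^ 2)) * deriv pYe y := by
      funext y
      rw [hderiv' y]
      field_simp
    rw [heq]
    exact (measurable_deriv pYe).const_mul _
  have hs_meas : StronglyMeasurable s := by
    have : StronglyMeasurable (Function.uncurry fun y x => (y - x) ^ 2 * gauss σ (y - x)) := by
      apply Continuous.stronglyMeasurable
      have : Continuous (fun q : ℝ × ℝ => (q.1 - q.2) ^ 2 * gauss σ (q.1 - q.2)) :=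
        ((continuous_fst.sub continuous_snd).pow 2).mul
          ((gauss_cont σ).comp (continuous_fst.sub continuous_snd))
      exact this
    exact this.integral_prod_right
  -- per-point strict Cauchy-Schwarz gap
  have hgap : ∀ y : ℝ, 0 < s y - m y ^ 2 / pYe y := by
    intro y
    set t : ℝ := m y / pYe y with ht
    have hpy := (hp y).ne'
    have expand : (fun x => ((y - x) - t) ^ 2 * gauss σ (y - x))
        = fun x => ((y - x) ^ 2 * gauss σ (y - x) - (2 * t) * ((y - x) * gauss σ (y - x))
            + t ^ 2 * gauss σ (y - x)) := by
      funext x; ring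
    have hI2 : Integrable (fun x => 2 * t * ((y - x) * gauss σ (y - x))) μX :=
      (int_aw y).const_mul (2 * t)
    have hI3 : Integrable (fun x => t ^ 2 * gauss σ (y - x)) μX :=
      (int_w y).const_mul (t ^ 2)
    have hI1 : Integrable (fun x => (y - x) ^ 2 * gauss σ (y - x)
        - 2 * t * ((y - x) * gauss σ (y - x))) μX := (int_a2w y).sub hI2
    have int_e : Integrable (fun x => ((y - x) - t) ^ 2 * gauss σ (y - x)) μX := by
      rw [expand]
      exact hI1.add hI3
    have int_val : ∫ x, ((y - x) - t) ^ 2 * gauss σ (y - x) ∂μX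
        = s y - 2 * t * m y + t ^ 2 * pYe y := by
      rw [expand, integral_add hI1 hI3, integral_sub (int_a2w y) hI2,
        integral_const_mul, integral_const_mul]
    have val_eq : s y - 2 * t * m y + t ^ 2 * pYe y = s y - m y ^ 2 / pYe y := by
      rw [ht]
      field_simp
      ring
    have hnonneg : 0 ≤ ∫ x, ((y - x) - t) ^ 2 * gauss σ (y - x) ∂μX :=
      integral_nonneg fun x => mul_nonneg (sq_nonneg _) (gauss_pos hσ _).le
    have hne : ∫ x, ((y - x) - t) ^ 2 * gauss σ (y - x) ∂μX ≠ 0 := by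
      intro h0
      have hzero := (integral_eq_zero_iff_of_nonneg
        (fun x => mul_nonneg (sq_nonneg _) (gauss_pos hσ _).le) int_e).1 h0
      have hae : ∀ᵐ x ∂μX, x = y - t := by
        filter_upwards [hzero] with x hx
        have hg := (gauss_pos hσ (y - x)).ne'
        have : ((y - x) - t) ^ 2 = 0 := by
          by_contra hc
          exact hc (by
            have := mul_eq_zero.1 hx
            tauto)
        have := pow_eq_zero_iff (n := 2) (by norm_num) |>.1 this
        linarith [sub_eq_zero.1 this]
      have hμ : μX {x | x ≠ y - t} = 0 := by
        rw [← ae_iff] at *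
        rw [ae_iff] at hae
        convert hae using 2
        exact ae_iff
      exact hnonconst (y - t) (eq_dirac_of_compl μX hμ)
    have hpos : 0 < ∫ x, ((y - x) - t) ^ 2 * gauss σ (y - x) ∂μX :=
      lt_of_le_of_ne hnonneg (Ne.symm hne)
    rw [int_val, val_eq] at hpos
    exact hpos
  -- product integrability and Fubini
  have int_z2g : Integrable (fun z : ℝ => z ^ 2 * gauss σ z) := integrable_sq_gauss hσ
  have int_inner : ∀ x : ℝ, Integrable (fun y : ℝ => (y - x) ^ 2 * gauss σ (y - x)) := by
    intro x
    exact int_z2g.comp_sub_right x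
  have int_inner_val : ∀ x : ℝ, ∫ y : ℝ, (y - x) ^ 2 * gauss σ (y - x) = σ ^ 2 := by
    intro x
    have := integral_sub_right_eq_self (μ := volume) (fun z : ℝ => z ^ 2 * gauss σ z) x
    rw [this]
    exact integral_sq_gauss hσ
  have hG_meas : AEStronglyMeasurable (fun q : ℝ × ℝ => (q.2 - q.1) ^ 2 * gauss σ (q.2 - q.1))
      (μX.prod volume) := by
    apply Continuous.aestronglyMeasurable
    exact ((continuous_snd.sub continuous_fst).pow 2).mul (gauss_cont2 σ)
  have hGint : Integrable (fun q : ℝ × ℝ => (q.2 - q.1) ^ 2 * gauss σ (q.2 - q.1))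
      (μX.prod volume) := by
    rw [integrable_prod_iff hG_meas]
    constructor
    · exact Eventually.of_forall fun x => int_inner x
    · have heq : (fun x : ℝ => ∫ y : ℝ, ‖(y - x) ^ 2 * gauss σ (y - x)‖) = fun _ => σ ^ 2 := by
        funext x
        rw [← int_inner_val x]
        congr 1; funext y
        rw [Real.norm_of_nonneg (mul_nonneg (sq_nonneg _) (gauss_pos hσ _).le)]
      rw [heq]
      exact integrable_const _
  have hs_int : Integrable s volume := by
    have := hGint.integral_prod_right
    exact this
  have hs_val : ∫ y, s y = σ ^ 2 := by
    have hswap := integral_integral_swap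
      (f := fun x y => (y - x) ^ 2 * gauss σ (y - x)) (μ := μX) (ν := volume) hGint
    rw [← hswap]
    have heq : (fun x : ℝ => ∫ y : ℝ, (y - x) ^ 2 * gauss σ (y - x)) = fun _ => σ ^ 2 := by
      funext x; exact int_inner_val x
    calc ∫ x, ∫ y : ℝ, (y - x) ^ 2 * gauss σ (y - x) ∂volume ∂μX
        = ∫ _x, σ ^ 2 ∂μX := by rw [heq]
      _ = σ ^ 2 := by simp [measure_univ]
  -- integrability of m²/p
  have hq_meas : Measurable (fun y => m y ^ 2 / pYe y) :=
    (hm_meas.pow_const 2).div hpY_cont.measurable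
  have hq_nonneg : ∀ y, 0 ≤ m y ^ 2 / pYe y := fun y =>
    div_nonneg (sq_nonneg _) (hp y).le
  have hq_le : ∀ y, m y ^ 2 / pYe y ≤ s y := fun y => by linarith [hgap y]
  have hq_int : Integrable (fun y => m y ^ 2 / pYe y) volume := by
    apply Integrable.mono' hs_int hq_meas.aestronglyMeasurable
    refine Eventually.of_forall fun y => ?_
    rw [Real.norm_of_nonneg (hq_nonneg y)]
    exact hq_le y
  -- the gap function has positive integral
  have hf_int : Integrable (fun y => s y - m y ^ 2 / pYe y) volume := hs_int.sub hq_int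
  have hf_pos : 0 < ∫ y, (s y - m y ^ 2 / pYe y) := by
    rcases lt_or_eq_of_le (integral_nonneg (f := fun y => s y - m y ^ 2 / pYe y) fun y => (hgap y).le) with h | h
    · exact h
    · exfalso
      have hzero := (integral_eq_zero_iff_of_nonneg (fun y => (hgap y).le) hf_int).1 h.symm
      have hzero' : ∀ᵐ y : ℝ ∂volume, s y - m y ^ 2 / pYe y = 0 := by
        filter_upwards [hzero] with y hy
        simpa using hy
      have hnull : volume {y : ℝ | ¬ (s y - m y ^ 2 / pYe y = 0)} = 0 := ae_iff.1 hzero'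
      have huniv : {y : ℝ | ¬ (s y - m y ^ 2 / pYe y = 0)} = Set.univ :=
        Set.eq_univ_of_forall fun y => ne_of_gt (hgap y)
      rw [huniv] at hnull
      simp [Real.volume_univ] at hnull
  have hsub : ∫ y, (s y - m y ^ 2 / pYe y)
      = (∫ y, s y) - ∫ y, m y ^ 2 / pYe y := integral_sub hs_int hq_int
  have hqval : ∫ y, m y ^ 2 / pYe y = σ ^ 2 - ∫ y, (s y - m y ^ 2 / pYe y) := by
    rw [hsub, hs_val]; ring
  -- final computation
  have hpt : (fun y => (deriv pYe y / pYe y) ^ 2 * pYe y)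
      = fun y => (1 / σ ^ 4) * (m y ^ 2 / pYe y) := by
    funext y
    rw [hderiv' y]
    have hpy := (hp y).ne'
    field_simp
  calc ∫ y, (deriv pYe y / pYe y) ^ 2 * pYe y
      = ∫ y, (1 / σ ^ 4) * (m y ^ 2 / pYe y) := by rw [hpt]
    _ = (1 / σ ^ 4) * ∫ y, m y ^ 2 / pYe y := integral_const_mul _ _
    _ = (1 / σ ^ 4) * (σ ^ 2 - ∫ y, (s y - m y ^ 2 / pYe y)) := by rw [hqval]
    _ < (1 / σ ^ 4) * σ ^ 2 := by
        apply mul_lt_mul_of_pos_left _ (by positivity)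
        linarith
    _ = 1 / σ ^ 2 := by field_simp
end
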